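/- arXiv:2402.02249 — 10 statements merged into one kernel-verified Lean document; each statement's English description precedes it below -/
import Mathlib

section
/- For every odd integer $m \ge 3$ and every $q \in (1/2, 1]$: $\dfrac{2 M_m(q) - 1}{2q - 1} < \sqrt{m}$. -/
/-- `majVote m q` is the probability that a strict majority of `m` independent
Bernoulli(`q`) voters is correct: `∑_{j > m/2} C(m,j) q^j (1-q)^(m-j)`.
For odd `m`, the lower summation bound `m/2 + 1` equals `(m+1)/2`. -/
noncomputable def majVote (m : ℕ) (q : ℝ) : ℝ :=
  ∑ j ∈ Finset.Ico (m / 2 + 1) (m + 1), (m.choose j : ℝ) * q ^ j * (1 - q) ^ (m - j)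

/-- `sigmaFun m q = ∑_{k odd, 1 ≤ k ≤ m-2} C(k, (k+1)/2) (q(1-q))^((k+1)/2)`. -/
noncomputable def sigmaFun (m : ℕ) (q : ℝ) : ℝ :=
  ∑ k ∈ (Finset.Icc 1 (m - 2)).filter (fun k => k % 2 = 1),
    (k.choose ((k + 1) / 2) : ℝ) * q ^ ((k + 1) / 2) * (1 - q) ^ ((k + 1) / 2)

lemma hasDerivAt_majVote (N : ℕ) (t : ℝ) :
    HasDerivAt (fun x => majVote (2*N+1) x)
      (((2*N+1 : ℕ) : ℝ) * (((2*N).choose N : ℝ)) * (t*(1-t))^N) t := by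
  set a : ℕ → ℝ := fun k => ((2*N).choose k : ℝ) * t^k * (1-t)^(2*N-k) with ha
  have hfun : (fun x => majVote (2*N+1) x)
      = fun x => ∑ j ∈ Finset.Ico (N+1) (2*N+2),
          ((2*N+1).choose j : ℝ) * x ^ j * (1 - x) ^ (2*N+1-j) := by
    funext x
    unfold majVote
    have : (2*N+1)/2 + 1 = N+1 := by omega
    rw [this]
  rw [hfun]
  have key : ∀ j ∈ Finset.Ico (N+1) (2*N+2),
      HasDerivAt (fun x : ℝ => ((2*N+1).choose j : ℝ) * x ^ j * (1-x)^(2*N+1-j))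
        (((2*N+1 : ℕ) : ℝ) * (a (j-1) - a j)) t := by
    intro j hj
    simp only [Finset.mem_Ico] at hj
    obtain ⟨i, rfl⟩ : ∃ i, j = i + 1 := ⟨j - 1, by omega⟩
    have h1 : HasDerivAt (fun x : ℝ => x ^ (i+1)) (((i+1 : ℕ):ℝ) * t^i) t := by
      simpa using hasDerivAt_pow (i+1) t
    have hu : HasDerivAt (fun x : ℝ => 1 - x) (-1) t := (hasDerivAt_id t).const_sub 1
    have h2 : HasDerivAt (fun x : ℝ => (1-x)^(2*N+1-(i+1)))
        ((((2*N+1-(i+1) : ℕ)):ℝ) * (1-t)^(2*N+1-(i+1)-1) * (-1)) t := hu.pow _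
    have h3 := (h1.mul h2).const_mul (((2*N+1).choose (i+1) : ℝ))
    have e1 : 2*N+1-(i+1) = 2*N - i := by omega
    have e2 : 2*N-i-1 = 2*N-(i+1) := by omega
    rw [e1, e2] at h3
    convert h3 using 1; rfl; rfl
    · funext x; rw [e1]; simp only [Pi.mul_apply]; ring
    have c1nat : (i+1) * (2*N+1).choose (i+1) = (2*N+1) * (2*N).choose i := by
      have h := Nat.add_one_mul_choose_eq (2*N) i
      rw [mul_comm]; exact h.symm
    have c2nat : (2*N - i) * (2*N+1).choose (i+1) = (2*N+1) * (2*N).choose (i+1) := by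
      have hA := Nat.add_one_mul_choose_eq (2*N) (i+1)
      have hB := Nat.choose_succ_right_eq (2*N+1) (i+1)
      rw [show 2*N+1-(i+1) = 2*N-i from by omega] at hB
      rw [mul_comm]
      rw [hA, hB]
    have c1 : ((i+1 : ℕ) : ℝ) * ((2*N+1).choose (i+1) : ℝ)
        = ((2*N+1 : ℕ) : ℝ) * ((2*N).choose i : ℝ) := by exact_mod_cast c1nat
    have c2 : ((2*N - i : ℕ) : ℝ) * ((2*N+1).choose (i+1) : ℝ)
        = ((2*N+1 : ℕ) : ℝ) * ((2*N).choose (i+1) : ℝ) := by exact_mod_cast c2nat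
    simp only [ha, Nat.add_sub_cancel]
    linear_combination (-(t^i*(1-t)^(2*N-i))) * c1 + (t^(i+1)*(1-t)^(2*N-(i+1)))*c2
  have hsum := HasDerivAt.fun_sum key
  convert hsum using 1; rfl; rfl
  rw [← Finset.mul_sum, mul_assoc]
  congr 1
  have : ∑ j ∈ Finset.Ico (N+1) (2*N+2), (a (j-1) - a j)
      = ∑ i ∈ Finset.range (N+1), ((fun k => a (N+k)) i - (fun k => a (N+k)) (i+1)) := by
    rw [Finset.sum_Ico_eq_sum_range]
    apply Finset.sum_congr (by congr 1; omega)
    intro i _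
    congr 2 <;> omega
  rw [this, Finset.sum_range_sub']
  have hz : a (N+(N+1)) = 0 := by
    have h0 : (2*N).choose (N+(N+1)) = 0 := Nat.choose_eq_zero_of_lt (by omega)
    simp only [ha, h0]
    norm_num
  rw [hz, sub_zero]
  simp only [ha, Nat.add_zero]
  rw [show 2*N - N = N by omega, mul_pow]
  ring

lemma sum_choose_upper (N : ℕ) :
    ∑ j ∈ Finset.Ico (N+1) (2*N+2), (2*N+1).choose j = 4^N := by
  have h1 : ∑ j ∈ Finset.range (N+1), (2*N+1).choose j = 4^N :=
    Nat.sum_range_choose_halfway N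
  have h2 : ∑ j ∈ Finset.range (2*N+2), (2*N+1).choose j = 2^(2*N+1) :=
    Nat.sum_range_choose (2*N+1)
  have h3 : ∑ j ∈ Finset.range (N+1), (2*N+1).choose j
      + ∑ j ∈ Finset.Ico (N+1) (2*N+2), (2*N+1).choose j
      = ∑ j ∈ Finset.range (2*N+2), (2*N+1).choose j := by
    rw [Finset.range_eq_Ico, Finset.range_eq_Ico]
    exact Finset.sum_Ico_consecutive (fun j => (2*N+1).choose j) (show 0 ≤ N+1 by omega) (show N+1 ≤ 2*N+2 by omega)
  have : 2^(2*N+1) = 4^N + 4^N := by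
    rw [pow_succ, pow_mul]; norm_num; ring
  omega

lemma majVote_half (N : ℕ) : majVote (2*N+1) (1/2) = 1/2 := by
  unfold majVote
  rw [show (2*N+1)/2+1 = N+1 from by omega]
  have hterm : ∀ j ∈ Finset.Ico (N+1) (2*N+1+1),
      ((2*N+1).choose j : ℝ) * (1/2:ℝ)^j * (1-1/2)^(2*N+1-j)
      = ((2*N+1).choose j : ℝ) * (1/2)^(2*N+1) := by
    intro j hj
    simp only [Finset.mem_Ico] at hj
    rw [show (1:ℝ)-1/2 = 1/2 by norm_num, mul_assoc, ← pow_add,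
      show j + (2*N+1-j) = 2*N+1 from by omega]
  rw [Finset.sum_congr rfl hterm, ← Finset.sum_mul]
  have hs : ∑ j ∈ Finset.Ico (N+1) (2*N+1+1), ((2*N+1).choose j : ℝ) = ((4^N : ℕ) : ℝ) := by
    rw [← Nat.cast_sum]
    norm_cast
    exact sum_choose_upper N
  rw [hs]
  push_cast
  rw [show (4:ℝ)^N = 2^(2*N) by rw [pow_mul]; norm_num]
  rw [div_pow, one_pow, pow_succ]
  have h2 : (2:ℝ)^(2*N) ≠ 0 := by positivity
  field_simp

lemma key_nat' : ∀ N : ℕ, 1 ≤ N → (2*N+1) * (Nat.centralBinom N)^2 < 16^N := by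
  intro N hN
  induction N with
  | zero => omega
  | succ n ih =>
    rcases Nat.eq_or_lt_of_le hN with h1 | h1
    · obtain rfl : n = 0 := by omega
      decide
    · have hn : 1 ≤ n := by omega
      have ih' := ih hn
      have hrec := Nat.succ_mul_centralBinom_succ n
      have hpos : 0 < (n+1)^2 := by positivity
      rw [← Nat.mul_lt_mul_right hpos]
      calc (2*(n+1)+1) * Nat.centralBinom (n+1) ^ 2 * (n+1)^2
          = (2*n+3) * ((n+1) * Nat.centralBinom (n+1))^2 := by ring
        _ = (2*n+3) * (2*(2*n+1)*Nat.centralBinom n)^2 := by rw [hrec]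
        _ = (2*n+3)*(2*n+1)*4 * ((2*n+1) * Nat.centralBinom n ^2) := by ring
        _ ≤ (2*n+3)*(2*n+1)*4 * 16^n := Nat.mul_le_mul_left _ (Nat.le_of_lt ih')
        _ < 16^(n+1) * (n+1)^2 := by
            rw [pow_succ]
            have h : (2*n+3)*(2*n+1)*4 < 16 * (n+1)^2 := by nlinarith
            calc (2*n+3)*(2*n+1)*4 * 16^n < 16*(n+1)^2 * 16^n := by
                  have h16 : 0 < 16^n := Nat.pow_pos (by norm_num)
                  exact (Nat.mul_lt_mul_right h16).mpr h
              _ = 16^n*16*(n+1)^2 := by ring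

/-- For every odd `m ≥ 3` and `q ∈ (1/2, 1]`: `(2 M_m(q) - 1)/(2q - 1) < √m`. -/
theorem stmt_4 (m : ℕ) (hm : Odd m) (hm3 : 3 ≤ m) (q : ℝ)
    (hq : q ∈ Set.Ioc (1 / 2 : ℝ) 1) :
    (2 * majVote m q - 1) / (2 * q - 1) < Real.sqrt m := by

  obtain ⟨N, hN⟩ := hm
  have hm' : m = 2*N+1 := by omega
  subst hm'
  obtain ⟨hq1, hq2⟩ := hq
  have hN1 : 1 ≤ N := by omega
  set C : ℝ := ((2*N+1:ℕ):ℝ) * ((2*N).choose N : ℝ) * ((1:ℝ)/4)^N with hC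
  have hdiff : Differentiable ℝ (majVote (2*N+1)) :=
    fun t => (hasDerivAt_majVote N t).differentiableAt
  have hbound : ∀ x ∈ interior (Set.Icc (1/2:ℝ) 1), deriv (majVote (2*N+1)) x ≤ C := by
    rw [interior_Icc]
    intro x hx
    rw [(hasDerivAt_majVote N x).deriv]
    have hx1 : (1:ℝ)/2 < x := hx.1
    have hx2 : x < 1 := hx.2
    have hx01 : 0 ≤ x*(1-x) := by nlinarith
    have hle : x*(1-x) ≤ 1/4 := by nlinarith
    rw [hC]
    have := pow_le_pow_left₀ hx01 hle N
    have hcoef : (0:ℝ) ≤ ((2*N+1:ℕ):ℝ) * ((2*N).choose N : ℝ) := by positivity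
    calc ((2*N+1:ℕ):ℝ) * ((2*N).choose N : ℝ) * (x*(1-x))^N
        ≤ ((2*N+1:ℕ):ℝ) * ((2*N).choose N : ℝ) * (1/4)^N :=
          mul_le_mul_of_nonneg_left this hcoef
      _ = _ := by norm_num
  have hmvt := (convex_Icc (1/2:ℝ) 1).image_sub_le_mul_sub_of_deriv_le
    hdiff.continuous.continuousOn hdiff.differentiableOn hbound
    (1/2) (by constructor <;> norm_num) q ⟨le_of_lt hq1, hq2⟩ (le_of_lt hq1)
  rw [majVote_half] at hmvt
  -- C < √(2N+1)
  have hkey : (2*N+1) * ((2*N).choose N)^2 < 16^N := key_nat' N hN1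
  have hkeyR : ((2*N+1:ℕ):ℝ) * ((2*N).choose N : ℝ)^2 < 16^N := by exact_mod_cast hkey
  have hsq : Real.sqrt ((2*N+1:ℕ):ℝ) * ((2*N).choose N : ℝ) < 4^N := by
    have h0 : (0:ℝ) ≤ Real.sqrt ((2*N+1:ℕ):ℝ) * ((2*N).choose N : ℝ) := by positivity
    apply lt_of_pow_lt_pow_left₀ 2 (by positivity)
    rw [mul_pow, Real.sq_sqrt (by positivity)]
    calc ((2*N+1:ℕ):ℝ) * ((2*N).choose N : ℝ)^2 < 16^N := hkeyR
      _ = (4^N)^2 := by rw [← pow_mul, mul_comm N 2, pow_mul]; norm_num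
  have hmm : ((2*N+1:ℕ):ℝ) = Real.sqrt ((2*N+1:ℕ):ℝ) * Real.sqrt ((2*N+1:ℕ):ℝ) :=
    (Real.mul_self_sqrt (by positivity)).symm
  have hClt : C < Real.sqrt ((2*N+1:ℕ):ℝ) := by
    have h4pos : (0:ℝ) < (4:ℝ)^N := by positivity
    have hppos : (0:ℝ) < ((1:ℝ)/4)^N := by positivity
    have hsqpos : (0:ℝ) < Real.sqrt ((2*N+1:ℕ):ℝ) := Real.sqrt_pos.mpr (by positivity)
    have h1 : (Real.sqrt ((2*N+1:ℕ):ℝ) * ((2*N).choose N : ℝ)) * (((1:ℝ)/4)^N * Real.sqrt ((2*N+1:ℕ):ℝ))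
        < (4:ℝ)^N * (((1:ℝ)/4)^N * Real.sqrt ((2*N+1:ℕ):ℝ)) :=
      mul_lt_mul_of_pos_right hsq (by positivity)
    have h2 : (4:ℝ)^N * (((1:ℝ)/4)^N * Real.sqrt ((2*N+1:ℕ):ℝ)) = Real.sqrt ((2*N+1:ℕ):ℝ) := by
      rw [div_pow, one_pow, ← mul_assoc]
      field_simp
    have h3 : (Real.sqrt ((2*N+1:ℕ):ℝ) * ((2*N).choose N : ℝ)) * (((1:ℝ)/4)^N * Real.sqrt ((2*N+1:ℕ):ℝ)) = C := by
      rw [hC]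
      linear_combination (-(((2*N).choose N:ℝ) * ((1:ℝ)/4)^N)) * hmm
    calc C = (Real.sqrt ((2*N+1:ℕ):ℝ) * ((2*N).choose N : ℝ)) * (((1:ℝ)/4)^N * Real.sqrt ((2*N+1:ℕ):ℝ)) := h3.symm
      _ < (4:ℝ)^N * (((1:ℝ)/4)^N * Real.sqrt ((2*N+1:ℕ):ℝ)) := h1
      _ = Real.sqrt ((2*N+1:ℕ):ℝ) := h2
  have h2q : (0:ℝ) < 2*q - 1 := by linarith
  rw [div_lt_iff₀ h2q]
  calc 2 * majVote (2*N+1) q - 1 = 2 * (majVote (2*N+1) q - 1/2) := by ring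
    _ ≤ 2 * (C * (q - 1/2)) := by linarith [hmvt]
    _ = C * (2*q - 1) := by ring
    _ < Real.sqrt ((2*N+1:ℕ):ℝ) * (2*q - 1) := mul_lt_mul_of_pos_right hClt h2q
end

section
/- For every odd integer $m \ge 3$ and every $q \in [0,1]$: $M_m(q) = q + (2q-1)\, \sigma(m,q)$, where $\sigma(m,q) := \sum_{k \text{ odd},\, 1 \le k \le m-2} \binom{k}{(k+1)/2} q^{(k+1)/2} (1-q)^{(k+1)/2}$. -/
private lemma tm (q : ℝ) {c c' a a' b b' : ℕ} (hc : c = c') (ha : a = a') (hb : b = b') :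
    (c : ℝ) * q ^ a * (1-q) ^ b = (c' : ℝ) * q ^ a' * (1-q) ^ b' := by
  subst hc; subst ha; subst hb; rfl

lemma majVote_range (n : ℕ) (q : ℝ) :
    majVote (2*n+1) q
      = ∑ i ∈ Finset.range (n+1), ((2*n+1).choose (n+1+i) : ℝ) * q ^ (n+1+i) * (1-q) ^ (n-i) := by
  unfold majVote
  rw [show (2*n+1)/2 + 1 = n+1 by omega, Finset.sum_Ico_eq_sum_range,
    show 2*n+1+1 - (n+1) = n+1 by omega]
  refine Finset.sum_congr rfl fun i hi => ?_
  simp only [Finset.mem_range] at hi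
  exact tm q rfl rfl (by omega)

lemma majVote_step (n : ℕ) (q : ℝ) :
    majVote (2*n+3) q = majVote (2*n+1) q
      + (2*q - 1) * ((2*n+1).choose (n+1) : ℝ) * (q ^ (n+1) * (1-q) ^ (n+1)) := by
  have hL : majVote (2*n+3) q
      = ∑ i ∈ Finset.range (n+2), ((2*n+3).choose (n+2+i) : ℝ) * q ^ (n+2+i) * (1-q) ^ (n+1-i) := by
    have h := majVote_range (n+1) q
    rw [show 2*(n+1)+1 = 2*n+3 by ring] at h
    rw [h]
  have hpas : ∀ i : ℕ, ((2*n+3).choose (n+2+i) : ℝ)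
      = ((2*n+1).choose (n+i) : ℝ) + 2*((2*n+1).choose (n+1+i) : ℝ) + ((2*n+1).choose (n+2+i) : ℝ) := by
    intro i
    have h1 : (2*n+3).choose (n+2+i) = (2*n+2).choose (n+1+i) + (2*n+2).choose (n+2+i) := by
      rw [show 2*n+3 = (2*n+2)+1 by ring, show n+2+i = (n+1+i)+1 by ring]
      exact Nat.choose_succ_succ _ _
    have h2 : (2*n+2).choose (n+1+i) = (2*n+1).choose (n+i) + (2*n+1).choose (n+1+i) := by
      rw [show 2*n+2 = (2*n+1)+1 by ring, show n+1+i = (n+i)+1 by ring]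
      exact Nat.choose_succ_succ _ _
    have h3 : (2*n+2).choose (n+2+i) = (2*n+1).choose (n+1+i) + (2*n+1).choose (n+2+i) := by
      rw [show 2*n+2 = (2*n+1)+1 by ring, show n+2+i = (n+1+i)+1 by ring]
      exact Nat.choose_succ_succ _ _
    rw [h1, h2, h3]; push_cast; ring
  set M' : ℝ := ∑ i ∈ Finset.range n, ((2*n+1).choose (n+2+i) : ℝ) * q ^ (n+2+i) * (1-q) ^ (n-1-i) with hM'def
  have hM : majVote (2*n+1) q = M' + ((2*n+1).choose (n+1) : ℝ) * q ^ (n+1) * (1-q) ^ n := by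
    rw [majVote_range, Finset.sum_range_succ']
    congr 1
    refine Finset.sum_congr rfl fun i hi => ?_
    simp only [Finset.mem_range] at hi
    exact tm q (by congr 1; omega) (by omega) (by omega)
  rw [hL, hM]
  have hsplit : ∑ i ∈ Finset.range (n+2), ((2*n+3).choose (n+2+i) : ℝ) * q ^ (n+2+i) * (1-q) ^ (n+1-i)
      = (∑ i ∈ Finset.range (n+2), ((2*n+1).choose (n+i) : ℝ) * q ^ (n+2+i) * (1-q) ^ (n+1-i))
      + 2*(∑ i ∈ Finset.range (n+2), ((2*n+1).choose (n+1+i) : ℝ) * q ^ (n+2+i) * (1-q) ^ (n+1-i))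
      + (∑ i ∈ Finset.range (n+2), ((2*n+1).choose (n+2+i) : ℝ) * q ^ (n+2+i) * (1-q) ^ (n+1-i)) := by
    rw [Finset.mul_sum, ← Finset.sum_add_distrib, ← Finset.sum_add_distrib]
    refine Finset.sum_congr rfl fun i _ => ?_
    rw [hpas i]; ring
  rw [hsplit]
  have hsym : (2*n+1).choose n = (2*n+1).choose (n+1) := by
    have h := Nat.choose_symm (show n+1 ≤ 2*n+1 by omega)
    rw [show 2*n+1 - (n+1) = n by omega] at h
    exact h
  have hS0 : ∑ i ∈ Finset.range (n+2), ((2*n+1).choose (n+i) : ℝ) * q ^ (n+2+i) * (1-q) ^ (n+1-i)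
      = q^2 * (M' + ((2*n+1).choose (n+1) : ℝ) * q ^ (n+1) * (1-q) ^ n)
        + ((2*n+1).choose (n+1) : ℝ) * q ^ (n+2) * (1-q) ^ (n+1) := by
    rw [Finset.sum_range_succ', ← hM, majVote_range, Finset.mul_sum]
    congr 1
    · refine Finset.sum_congr rfl fun i hi => ?_
      simp only [Finset.mem_range] at hi
      have e1 : q ^ (n+2+(i+1)) = q^2 * q ^ (n+1+i) := by
        rw [← pow_add]; congr 1; omega
      rw [show n+(i+1) = n+1+i by ring, e1, show n+1-(i+1) = n - i by omega]; ring
    · rw [show n+0 = n from rfl, hsym, show n+2+0 = n+2 from rfl, show n+1-0 = n+1 from rfl]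
  have hS1 : ∑ i ∈ Finset.range (n+2), ((2*n+1).choose (n+1+i) : ℝ) * q ^ (n+2+i) * (1-q) ^ (n+1-i)
      = q*(1-q) * (M' + ((2*n+1).choose (n+1) : ℝ) * q ^ (n+1) * (1-q) ^ n) := by
    rw [Finset.sum_range_succ, ← hM, majVote_range, Finset.mul_sum]
    rw [Nat.choose_eq_zero_of_lt (by omega)]
    simp only [Nat.cast_zero, zero_mul, add_zero]
    refine Finset.sum_congr rfl fun i hi => ?_
    simp only [Finset.mem_range] at hi
    have e1 : q ^ (n+2+i) = q * q ^ (n+1+i) := by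
      rw [← pow_succ']; congr 1; omega
    have e2 : (1-q) ^ (n+1-i) = (1-q) * (1-q) ^ (n-i) := by
      rw [← pow_succ']; congr 1; omega
    rw [e1, e2]; ring
  have hS2 : ∑ i ∈ Finset.range (n+2), ((2*n+1).choose (n+2+i) : ℝ) * q ^ (n+2+i) * (1-q) ^ (n+1-i)
      = (1-q)^2 * M' := by
    rw [Finset.sum_range_succ, Finset.sum_range_succ]
    rw [Nat.choose_eq_zero_of_lt (show 2*n+1 < n+2+n by omega),
        Nat.choose_eq_zero_of_lt (show 2*n+1 < n+2+(n+1) by omega)]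
    simp only [Nat.cast_zero, zero_mul, add_zero]
    rw [hM'def, Finset.mul_sum]
    refine Finset.sum_congr rfl fun i hi => ?_
    simp only [Finset.mem_range] at hi
    have e2 : (1-q) ^ (n+1-i) = (1-q)^2 * (1-q) ^ (n-1-i) := by
      rw [← pow_add]; congr 1; omega
    rw [e2]; ring
  rw [hS0, hS1, hS2]
  have p1 : q ^ (n+2) = q ^ (n+1) * q := pow_succ q (n+1)
  have p2 : q ^ (n+1) = q ^ n * q := pow_succ q n
  have p3 : (1-q) ^ (n+1) = (1-q) ^ n * (1-q) := pow_succ (1-q) n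
  rw [p1, p3, p2]; ring

lemma sigmaFun_step (n : ℕ) (hn : 1 ≤ n) (q : ℝ) :
    sigmaFun (2*n+3) q = sigmaFun (2*n+1) q
      + ((2*n+1).choose (n+1) : ℝ) * q ^ (n+1) * (1-q) ^ (n+1) := by
  unfold sigmaFun
  rw [show 2*n+3-2 = 2*n+1 by omega, show 2*n+1-2 = 2*n-1 by omega]
  have hset : Finset.Icc 1 (2*n+1) = insert (2*n+1) (insert (2*n) (Finset.Icc 1 (2*n-1))) := by
    ext x
    simp only [Finset.mem_Icc, Finset.mem_insert]
    omega
  rw [hset, Finset.filter_insert, Finset.filter_insert]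
  rw [if_pos (by omega : (2*n+1) % 2 = 1), if_neg (by omega : ¬ (2*n) % 2 = 1)]
  rw [Finset.sum_insert]
  · rw [show (2*n+1+1)/2 = n+1 by omega]; ring
  · simp only [Finset.mem_filter, Finset.mem_Icc]
    omega

lemma base3 (q : ℝ) : majVote 3 q = q + (2 * q - 1) * sigmaFun 3 q := by
  have h1 : majVote 3 q = majVote (2*1+1) q := by norm_num
  rw [h1, majVote_range]
  have h2 : sigmaFun 3 q = (1 : ℝ) * q * (1-q) := by
    unfold sigmaFun
    norm_num
    rw [Finset.filter_singleton, if_pos rfl, Finset.sum_singleton]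
    norm_num
  rw [h2]
  simp [Finset.sum_range_succ]
  ring

/-- For every odd `m ≥ 3` and `q ∈ [0,1]`: `M_m(q) = q + (2q - 1) σ(m, q)`. -/
theorem stmt_5 (m : ℕ) (hm : Odd m) (hm3 : 3 ≤ m) (q : ℝ)
    (hq : q ∈ Set.Icc (0 : ℝ) 1) :
    majVote m q = q + (2 * q - 1) * sigmaFun m q := by
  obtain ⟨k, hk⟩ := hm
  have hk1 : 1 ≤ k := by omega
  subst hk
  induction k, hk1 using Nat.le_induction with
  | base => exact base3 q
  | succ n hn ih =>
    have h1 : 2*(n+1)+1 = 2*n+3 := by ring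
    rw [h1, majVote_step, sigmaFun_step n hn, ih (by omega)]
    ring
end

section
/- For every odd integer $m \ge 3$ and every $q \in [0,1]$: $M_m(q) = M_{m-2}(q) + (2q-1) \binom{m-2}{(m-1)/2} q^{(m-1)/2} (1-q)^{(m-1)/2}$. -/
/-- Upper-tail binomial sum: `∑_{j=b}^{N} C(N,j) q^j (1-q)^(N-j)`. -/
noncomputable def Tsum (b N : ℕ) (q : ℝ) : ℝ :=
  ∑ j ∈ Finset.Ico b (N + 1), (N.choose j : ℝ) * q ^ j * (1 - q) ^ (N - j)

lemma pascal_step (b N : ℕ) (hb : b ≤ N) (q : ℝ) :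
    Tsum (b + 1) (N + 1) q = q * Tsum b N q + (1 - q) * Tsum (b + 1) N q := by
  unfold Tsum
  have h1 : ∑ j ∈ Finset.Ico (b + 1) (N + 1 + 1),
        ((N + 1).choose j : ℝ) * q ^ j * (1 - q) ^ (N + 1 - j)
      = ∑ i ∈ Finset.Ico b (N + 1),
        ((N + 1).choose (1 + i) : ℝ) * q ^ (1 + i) * (1 - q) ^ (N + 1 - (1 + i)) := by
    rw [Finset.sum_Ico_add (fun j => ((N + 1).choose j : ℝ) * q ^ j * (1 - q) ^ (N + 1 - j))
      b (N + 1) 1]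
  rw [h1]
  have h2 : ∀ i ∈ Finset.Ico b (N + 1),
      ((N + 1).choose (1 + i) : ℝ) * q ^ (1 + i) * (1 - q) ^ (N + 1 - (1 + i))
      = q * ((N.choose i : ℝ) * q ^ i * (1 - q) ^ (N - i))
        + (N.choose (i + 1) : ℝ) * q ^ (1 + i) * (1 - q) ^ (N + 1 - (1 + i)) := by
    intro i _
    have he : 1 + i = i + 1 := by omega
    rw [he, Nat.choose_succ_succ]
    have he2 : N + 1 - (i + 1) = N - i := by omega
    rw [he2]
    push_cast
    ring
  rw [Finset.sum_congr rfl h2, Finset.sum_add_distrib, ← Finset.mul_sum]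
  congr 1
  -- remaining: second sum equals (1-q) * Tsum (b+1) N q
  have h3 : ∑ i ∈ Finset.Ico b (N + 1),
        (N.choose (1 + i) : ℝ) * q ^ (1 + i) * (1 - q) ^ (N + 1 - (1 + i))
      = ∑ j ∈ Finset.Ico (b + 1) (N + 1 + 1),
        (N.choose j : ℝ) * q ^ j * (1 - q) ^ (N + 1 - j) := by
    rw [Finset.sum_Ico_add (fun j => (N.choose j : ℝ) * q ^ j * (1 - q) ^ (N + 1 - j))
      b (N + 1) 1]
  have h4 : ∀ i ∈ Finset.Ico b (N + 1),
      (N.choose (i + 1) : ℝ) * q ^ (1 + i) * (1 - q) ^ (N + 1 - (1 + i))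
      = (N.choose (1 + i) : ℝ) * q ^ (1 + i) * (1 - q) ^ (N + 1 - (1 + i)) := by
    intro i _; rw [Nat.add_comm 1 i]
  rw [Finset.sum_congr rfl h4, h3,
    Finset.sum_Ico_succ_top (by omega : b + 1 ≤ N + 1)]
  have h5 : (N.choose (N + 1) : ℝ) * q ^ (N + 1) * (1 - q) ^ (N + 1 - (N + 1)) = 0 := by
    rw [Nat.choose_succ_self]; push_cast; ring
  rw [h5, add_zero, Finset.mul_sum]
  apply Finset.sum_congr rfl
  intro j hj
  have hjN : j ≤ N := by
    have := (Finset.mem_Ico.mp hj).2; omega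
  have he : N + 1 - j = (N - j) + 1 := by omega
  rw [he]
  ring

lemma key (c : ℕ) (q : ℝ) :
    Tsum (c + 2) (2 * c + 3) q = Tsum (c + 1) (2 * c + 1) q
      + (2 * q - 1) * ((2 * c + 1).choose (c + 1) : ℝ) * q ^ (c + 1) * (1 - q) ^ (c + 1) := by
  have e1 : Tsum (c + 2) (2 * c + 3) q
      = q * Tsum (c + 1) (2 * c + 2) q + (1 - q) * Tsum (c + 2) (2 * c + 2) q := by
    exact pascal_step (c + 1) (2 * c + 2) (by omega) q
  have e2 : Tsum (c + 1) (2 * c + 2) q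
      = q * Tsum c (2 * c + 1) q + (1 - q) * Tsum (c + 1) (2 * c + 1) q := by
    exact pascal_step c (2 * c + 1) (by omega) q
  have e3 : Tsum (c + 2) (2 * c + 2) q
      = q * Tsum (c + 1) (2 * c + 1) q + (1 - q) * Tsum (c + 2) (2 * c + 1) q := by
    exact pascal_step (c + 1) (2 * c + 1) (by omega) q
  have hsym : (2 * c + 1).choose c = (2 * c + 1).choose (c + 1) := by
    rw [← Nat.choose_symm (by omega : c + 1 ≤ 2 * c + 1)]
    congr 1; omega
  have e4 : Tsum c (2 * c + 1) q
      = ((2 * c + 1).choose (c + 1) : ℝ) * q ^ c * (1 - q) ^ (c + 1)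
        + Tsum (c + 1) (2 * c + 1) q := by
    unfold Tsum
    rw [Finset.sum_eq_sum_Ico_succ_bot (by omega : c < 2 * c + 1 + 1)]
    rw [show 2 * c + 1 - c = c + 1 from by omega, hsym]
  have e5 : Tsum (c + 1) (2 * c + 1) q
      = ((2 * c + 1).choose (c + 1) : ℝ) * q ^ (c + 1) * (1 - q) ^ c
        + Tsum (c + 2) (2 * c + 1) q := by
    unfold Tsum
    rw [Finset.sum_eq_sum_Ico_succ_bot (by omega : c + 1 < 2 * c + 1 + 1)]
    rw [show 2 * c + 1 - (c + 1) = c from by omega]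
  linear_combination e1 + q * e2 + (1 - q) * e3 + q ^ 2 * e4 - (1 - q) ^ 2 * e5

/-- For every odd `m ≥ 3` and `q ∈ [0,1]`:
`M_m(q) = M_{m-2}(q) + (2q - 1) C(m-2, (m-1)/2) q^((m-1)/2) (1-q)^((m-1)/2)`. -/
theorem stmt_6 (m : ℕ) (hm : Odd m) (hm3 : 3 ≤ m) (q : ℝ)
    (hq : q ∈ Set.Icc (0 : ℝ) 1) :
    majVote m q = majVote (m - 2) q +
      (2 * q - 1) * ((m - 2).choose ((m - 1) / 2) : ℝ) *
        q ^ ((m - 1) / 2) * (1 - q) ^ ((m - 1) / 2) := by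
  obtain ⟨k, hk⟩ := hm
  obtain ⟨c, rfl⟩ : ∃ c, m = 2 * c + 3 := ⟨k - 1, by omega⟩
  rw [show 2 * c + 3 - 2 = 2 * c + 1 from by omega,
    show (2 * c + 3 - 1) / 2 = c + 1 from by omega]
  have h1 : majVote (2 * c + 3) q = Tsum (c + 2) (2 * c + 3) q := by
    unfold majVote Tsum
    rw [show (2 * c + 3) / 2 + 1 = c + 2 from by omega]
  have h2 : majVote (2 * c + 1) q = Tsum (c + 1) (2 * c + 1) q := by
    unfold majVote Tsum
    rw [show (2 * c + 1) / 2 + 1 = c + 1 from by omega]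
  rw [h1, h2]
  exact key c q
end

section
/- For every odd integer $m \ge 3$ and every $q \in [0,1]$: $1 + 2\sigma(m,q) \le 1 + \dfrac{1}{\sqrt{\pi}}\Big(2\sqrt{\tfrac{m-1}{2}} - 1\Big)$, where $\sigma(m,q) := \sum_{k \text{ odd},\, 1 \le k \le m-2} \binom{k}{(k+1)/2} q^{(k+1)/2} (1-q)^{(k+1)/2}$. -/
lemma aux_binom (n : ℕ) (hn : 1 ≤ n) :
    (Nat.centralBinom n : ℝ) * Real.sqrt (Real.pi * n) ≤ 4 ^ n := by
  have hπ := Real.pi_pos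
  have hW := Real.Wallis.le_W n
  have hWeq := Real.Wallis.W_eq_factorial_ratio n
  have hn' : (1:ℝ) ≤ n := by exact_mod_cast hn
  have h1 : Real.pi * n ≤ (2 * n + 1) * Real.Wallis.W n := by
    have h2 : (0:ℝ) < 2 * (n:ℝ) + 2 := by positivity
    rw [div_mul_eq_mul_div, div_le_iff₀ h2] at hW
    nlinarith [Real.Wallis.W_pos n]
  have h := Nat.choose_mul_factorial_mul_factorial (show n ≤ 2*n by omega)
  rw [show 2*n-n = n from by omega] at h
  have hfac : (Nat.centralBinom n : ℝ) * n.factorial * n.factorial = (2*n).factorial := by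
    exact_mod_cast h
  have hcpos : (0:ℝ) < Nat.centralBinom n := by
    exact_mod_cast Nat.centralBinom_pos n
  have hfpos : (0:ℝ) < (n.factorial : ℝ) := by exact_mod_cast n.factorial_pos
  have hfpos2 : (0:ℝ) < ((2*n).factorial : ℝ) := by exact_mod_cast (2*n).factorial_pos
  -- (2n+1) W n = 16^n / c^2
  have h2 : (2 * (n:ℝ) + 1) * Real.Wallis.W n = 16 ^ n / (Nat.centralBinom n : ℝ) ^ 2 := by
    rw [hWeq]
    rw [show ((2:ℝ) ^ (4*n)) = 16 ^ n by rw [pow_mul]; norm_num]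
    field_simp
    rw [← hfac]; ring
  -- so c^2 * (π n) ≤ 16 ^ n
  have h3 : (Nat.centralBinom n : ℝ) ^ 2 * (Real.pi * n) ≤ 16 ^ n := by
    rw [h2] at h1
    have := (le_div_iff₀ (pow_pos hcpos 2)).mp h1
    linarith
  calc (Nat.centralBinom n : ℝ) * Real.sqrt (Real.pi * n)
      = Real.sqrt ((Nat.centralBinom n : ℝ) ^ 2 * (Real.pi * n)) := by
        rw [Real.sqrt_mul (by positivity : (0:ℝ) ≤ (Nat.centralBinom n:ℝ)^2),
          Real.sqrt_sq hcpos.le]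
    _ ≤ Real.sqrt (16 ^ n) := Real.sqrt_le_sqrt h3
    _ = 4 ^ n := by
        rw [show (16:ℝ) ^ n = ((4:ℝ) ^ n) ^ 2 by rw [← pow_mul, pow_mul']; norm_num]
        exact Real.sqrt_sq (by positivity)

lemma aux_sum : ∀ N : ℕ, 1 ≤ N →
    ∑ n ∈ Finset.Icc 1 N, (1 / Real.sqrt n) ≤ 2 * Real.sqrt N - 1 := by
  refine Nat.le_induction ?_ ?_
  · norm_num
  · intro n hn IH
    rw [Finset.sum_Icc_succ_top (by omega : 1 ≤ n + 1)]
    have h0 : (0:ℝ) ≤ n := by positivity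
    have h1 : (0:ℝ) < Real.sqrt (n + 1) := Real.sqrt_pos.mpr (by positivity)
    have hs : Real.sqrt n * Real.sqrt (n + 1) ≤ (n:ℝ) + 1/2 := by
      rw [← Real.sqrt_mul h0]
      calc Real.sqrt ((n:ℝ) * (n + 1)) ≤ Real.sqrt (((n:ℝ) + 1/2)^2) :=
            Real.sqrt_le_sqrt (by nlinarith)
        _ = (n:ℝ) + 1/2 := Real.sqrt_sq (by positivity)
    have key : 1 / Real.sqrt ((n:ℝ) + 1) ≤ 2 * (Real.sqrt (n + 1) - Real.sqrt n) := by
      rw [div_le_iff₀ h1]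
      have : Real.sqrt ((n:ℝ)+1) * Real.sqrt ((n:ℝ)+1) = (n:ℝ) + 1 :=
        Real.mul_self_sqrt (by positivity)
      nlinarith
    push_cast
    linarith

lemma aux_central (n : ℕ) (hn : 1 ≤ n) :
    Nat.centralBinom n = 2 * (2*n-1).choose n := by
  obtain ⟨j, rfl⟩ : ∃ j, n = j + 1 := ⟨n - 1, by omega⟩
  rw [Nat.centralBinom, show 2*(j+1)-1 = 2*j+1 from by omega,
    show 2*(j+1) = (2*j+1) + 1 from by omega, Nat.choose_succ_succ]
  have hsymm : (2*j+1).choose j = (2*j+1).choose (j+1) := by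
    have := Nat.choose_symm (show j + 1 ≤ 2*j+1 by omega)
    rw [show 2*j+1 - (j+1) = j from by omega] at this
    omega
  rw [Nat.succ_eq_add_one, ← hsymm]
  omega

/-- For every odd `m ≥ 3` and `q ∈ [0,1]`:
`1 + 2 σ(m,q) ≤ 1 + (1/√π) (2 √((m-1)/2) - 1)`. -/
theorem stmt_7 (m : ℕ) (hm : Odd m) (hm3 : 3 ≤ m) (q : ℝ)
    (hq : q ∈ Set.Icc (0 : ℝ) 1) :
    1 + 2 * sigmaFun m q ≤
      1 + (1 / Real.sqrt Real.pi) * (2 * Real.sqrt (((m : ℝ) - 1) / 2) - 1) := by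
  obtain ⟨N, hmN⟩ := hm
  have hN1 : 1 ≤ N := by omega
  obtain ⟨hq0, hq1⟩ := hq
  have hsπ : (0:ℝ) < Real.sqrt Real.pi := Real.sqrt_pos.mpr Real.pi_pos
  -- reindex
  have hrw : sigmaFun m q
      = ∑ n ∈ Finset.Icc 1 N, (((2*n-1).choose n : ℝ)) * q^n * (1-q)^n := by
    unfold sigmaFun
    refine Finset.sum_nbij' (i := fun k => (k+1)/2) (j := fun n => 2*n-1)
      ?_ ?_ ?_ ?_ ?_
    · intro k hk
      simp only [Finset.mem_filter, Finset.mem_Icc] at hk ⊢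
      omega
    · intro n hn
      simp only [Finset.mem_filter, Finset.mem_Icc] at hn ⊢
      omega
    · intro k hk
      simp only [Finset.mem_filter, Finset.mem_Icc] at hk
      show 2*((k+1)/2) - 1 = k
      omega
    · intro n hn
      simp only [Finset.mem_Icc] at hn
      show ((2*n-1)+1)/2 = n
      omega
    · intro k hk
      simp only [Finset.mem_filter, Finset.mem_Icc] at hk
      rw [show 2*((k+1)/2)-1 = k from by omega]
  -- termwise bound
  have hterm : ∀ n ∈ Finset.Icc 1 N,
      (((2*n-1).choose n : ℝ)) * q^n * (1-q)^n
        ≤ (1/(2*Real.sqrt Real.pi)) * (1 / Real.sqrt n) := by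
    intro n hn
    simp only [Finset.mem_Icc] at hn
    have hn1 : 1 ≤ n := hn.1
    have hsn : (0:ℝ) < Real.sqrt n := Real.sqrt_pos.mpr (by exact_mod_cast hn1)
    have hc : (Nat.centralBinom n : ℝ) = 2 * ((2*n-1).choose n : ℝ) := by
      exact_mod_cast congrArg (Nat.cast (R := ℝ)) (aux_central n hn1)
    have hb := aux_binom n hn1
    rw [Real.sqrt_mul Real.pi_pos.le, hc] at hb
    have hx : q^n * (1-q)^n ≤ (1/4:ℝ)^n := by
      rw [← mul_pow]
      exact pow_le_pow_left₀ (mul_nonneg hq0 (by linarith)) (by nlinarith [sq_nonneg (q - 1/2)]) n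
    have hcn : (0:ℝ) ≤ ((2*n-1).choose n : ℝ) := by positivity
    calc (((2*n-1).choose n : ℝ)) * q^n * (1-q)^n
        = (((2*n-1).choose n : ℝ)) * (q^n * (1-q)^n) := by ring
      _ ≤ (((2*n-1).choose n : ℝ)) * (1/4:ℝ)^n :=
          mul_le_mul_of_nonneg_left hx hcn
      _ ≤ (1/(2*Real.sqrt Real.pi)) * (1 / Real.sqrt n) := by
          rw [show ((2*n-1).choose n : ℝ) * (1/4:ℝ)^n
              = ((2*n-1).choose n : ℝ) / 4^n from by rw [div_pow, one_pow]; ring,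
            show (1/(2*Real.sqrt Real.pi)) * (1 / Real.sqrt n)
              = 1 / (2 * Real.sqrt Real.pi * Real.sqrt n) from by ring,
            div_le_div_iff₀ (by positivity) (by positivity)]
          nlinarith [hb]
  -- combine
  have hσ : sigmaFun m q ≤ (1/(2*Real.sqrt Real.pi)) * (2 * Real.sqrt N - 1) := by
    rw [hrw]
    calc ∑ n ∈ Finset.Icc 1 N, (((2*n-1).choose n : ℝ)) * q^n * (1-q)^n
        ≤ ∑ n ∈ Finset.Icc 1 N, (1/(2*Real.sqrt Real.pi)) * (1 / Real.sqrt n) :=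
          Finset.sum_le_sum hterm
      _ = (1/(2*Real.sqrt Real.pi)) * ∑ n ∈ Finset.Icc 1 N, (1 / Real.sqrt n) := by
          rw [Finset.mul_sum]
      _ ≤ (1/(2*Real.sqrt Real.pi)) * (2 * Real.sqrt N - 1) := by
          apply mul_le_mul_of_nonneg_left (aux_sum N hN1) (by positivity)
  have hmr : ((m:ℝ) - 1)/2 = (N:ℝ) := by
    subst hmN; push_cast; ring
  rw [hmr]
  have : (1 / Real.sqrt Real.pi) * (2 * Real.sqrt N - 1)
      = 2 * ((1/(2*Real.sqrt Real.pi)) * (2 * Real.sqrt N - 1)) := by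
    field_simp
  linarith
end

section
/- Let $p \in [1/2, 1)$, $\epsilon \in (0, 1-p]$, $q \in (1/2, 1]$, and let $m \ge 3$ be an odd integer. Define $d := \epsilon(1-p-\epsilon)p + ((1-p-\epsilon)p)^2$ and $c := 1 - \epsilon - 2p(1-p-\epsilon)$. Then $\log\Big(2\sqrt{M_m(q)(1-M_m(q))\,\epsilon^2 + d} + c\Big) > m \cdot \log\Big(2\sqrt{q(1-q)\,\epsilon^2 + d} + c\Big)$. -/
private lemma super_core_le (a e X Y Z : ℝ) (he : 0 < e) (hea : e ≤ a) (ha1 : a < 1)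
    (hXnn : 0 ≤ X) (hYnn : 0 ≤ Y)
    (hXa : X ≤ a) (hYa : Y ≤ a)
    (hZ : 0 ≤ Z) (hZ2 : e^2 * Z^2 = e^2 * (a^2 - e^2) + (X^2 - (a^2 - e^2)) * (Y^2 - (a^2 - e^2))) :
    (1 - a + X) * (1 - a + Y) ≤ 1 - a + Z := by
  have ha0 : 0 < a := lt_of_lt_of_le he hea
  have hb2 : 0 ≤ a^2 - e^2 := by nlinarith
  have hα0 : 0 ≤ a - X := sub_nonneg.mpr hXa
  have hβ0 : 0 ≤ a - Y := sub_nonneg.mpr hYa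
  have hmain : (a - (a-X) - (a-Y) + (a-X)*(a-Y)) ≤ Z := by
    rcases lt_or_ge (a - (a-X) - (a-Y) + (a-X)*(a-Y)) 0 with h | h
    · linarith
    · have hGpos : 0 ≤ (a^2-e^2) * (2*a - (a-X)) * (2*a - (a-Y))
          + e^2 * (1 - a) * (2*(X*Y) - (1-a)*((a-X)*(a-Y))) := by
        have hXY : 0 ≤ X * Y := mul_nonneg hXnn hYnn
        have h2 : X*Y ≤ 2*(X*Y) - (1-a)*((a-X)*(a-Y)) := by nlinarith [mul_nonneg h ha0.le]
        have hterm2 : 0 ≤ e^2 * (1 - a) * (2*(X*Y) - (1-a)*((a-X)*(a-Y))) :=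
          mul_nonneg (mul_nonneg (sq_nonneg e) (by linarith)) (le_trans hXY h2)
        have hterm1 : 0 ≤ (a^2-e^2) * (2*a - (a-X)) * (2*a - (a-Y)) :=
          mul_nonneg (mul_nonneg hb2 (by linarith)) (by linarith)
        linarith
      have hid : e^2 * a^2 * (Z^2 - (a - (a-X) - (a-Y) + (a-X)*(a-Y))^2)
          = (a-X) * (a-Y) * ((a^2-e^2) * (2*a - (a-X)) * (2*a - (a-Y))
            + e^2 * (1 - a) * (2*(X*Y) - (1-a)*((a-X)*(a-Y)))) := by
        linear_combination a^2 * hZ2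
      have hsq : (a - (a-X) - (a-Y) + (a-X)*(a-Y))^2 ≤ Z^2 := by
        have h1 : 0 ≤ (a-X) * (a-Y) * ((a^2-e^2) * (2*a - (a-X)) * (2*a - (a-Y))
            + e^2 * (1 - a) * (2*(X*Y) - (1-a)*((a-X)*(a-Y)))) :=
          mul_nonneg (mul_nonneg hα0 hβ0) hGpos
        nlinarith [mul_pos (pow_pos he 2) (pow_pos ha0 2)]
      by_contra hc
      push_neg at hc
      nlinarith [mul_nonneg (sub_nonneg.mpr hc.le) (add_nonneg hZ h)]
  linarith [hmain]

noncomputable def phiF (a e τ : ℝ) : ℝ := 1 - a + Real.sqrt ((a^2 - e^2) + e^2 * τ)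

private lemma phiF_arg_nonneg (a e τ : ℝ) (hea : e ≤ a) (he : 0 < e) (hτ : 0 ≤ τ) :
    0 ≤ (a^2 - e^2) + e^2 * τ := by nlinarith

private lemma phiF_pos (a e τ : ℝ) (ha1 : a < 1) : 0 < phiF a e τ := by
  have := Real.sqrt_nonneg ((a^2 - e^2) + e^2 * τ)
  unfold phiF; linarith

private lemma phiF_mono (a e τ σ : ℝ) (h : τ ≤ σ) (he : 0 ≤ e) : phiF a e τ ≤ phiF a e σ := by
  unfold phiF
  have : (a^2 - e^2) + e^2 * τ ≤ (a^2 - e^2) + e^2 * σ := by nlinarith [sq_nonneg e]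
  linarith [Real.sqrt_le_sqrt this]

private lemma phiF_le_one (a e τ : ℝ) (he : 0 < e) (hea : e ≤ a) (hτ : τ ≤ 1) (hτ0 : 0 ≤ τ) :
    phiF a e τ ≤ 1 := by
  unfold phiF
  have h1 : (a^2 - e^2) + e^2 * τ ≤ a^2 := by nlinarith
  have h2 : Real.sqrt ((a^2 - e^2) + e^2 * τ) ≤ a := by
    calc Real.sqrt ((a^2 - e^2) + e^2 * τ) ≤ Real.sqrt (a^2) := Real.sqrt_le_sqrt h1
    _ = a := Real.sqrt_sq (by linarith)
  linarith

private lemma phiF_super (a e τ σ : ℝ) (he : 0 < e) (hea : e ≤ a) (ha1 : a < 1)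
    (hτ0 : 0 ≤ τ) (hτ1 : τ ≤ 1) (hσ0 : 0 ≤ σ) (hσ1 : σ ≤ 1) :
    phiF a e τ * phiF a e σ ≤ phiF a e (τ * σ) := by
  have ha0 : 0 < a := lt_of_lt_of_le he hea
  set X := Real.sqrt ((a^2 - e^2) + e^2 * τ) with hX
  set Y := Real.sqrt ((a^2 - e^2) + e^2 * σ) with hY
  set Z := Real.sqrt ((a^2 - e^2) + e^2 * (τ * σ)) with hZ
  have hX2 : X^2 = (a^2 - e^2) + e^2 * τ := Real.sq_sqrt (phiF_arg_nonneg a e τ hea he hτ0)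
  have hY2 : Y^2 = (a^2 - e^2) + e^2 * σ := Real.sq_sqrt (phiF_arg_nonneg a e σ hea he hσ0)
  have hZ2 : Z^2 = (a^2 - e^2) + e^2 * (τ * σ) :=
    Real.sq_sqrt (phiF_arg_nonneg a e _ hea he (mul_nonneg hτ0 hσ0))
  have hXa : X ≤ a := by
    rw [hX]
    calc Real.sqrt ((a^2 - e^2) + e^2 * τ) ≤ Real.sqrt (a^2) := Real.sqrt_le_sqrt (by nlinarith)
    _ = a := Real.sqrt_sq ha0.le
  have hYa : Y ≤ a := by
    rw [hY]
    calc Real.sqrt ((a^2 - e^2) + e^2 * σ) ≤ Real.sqrt (a^2) := Real.sqrt_le_sqrt (by nlinarith)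
    _ = a := Real.sqrt_sq ha0.le
  exact super_core_le a e X Y Z he hea ha1 (Real.sqrt_nonneg _) (Real.sqrt_nonneg _)
    hXa hYa (Real.sqrt_nonneg _) (by rw [hX2, hY2, hZ2]; ring)

private lemma super_core' (a e X Y Z : ℝ) (he : 0 < e) (hea : e ≤ a) (ha1 : a < 1)
    (hXnn : 0 ≤ X) (hYnn : 0 ≤ Y)
    (hXa : X < a) (hYa : Y < a)
    (hZ : 0 ≤ Z) (hZ2 : e^2 * Z^2 = e^2 * (a^2 - e^2) + (X^2 - (a^2 - e^2)) * (Y^2 - (a^2 - e^2))) :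
    (1 - a + X) * (1 - a + Y) < 1 - a + Z := by
  have ha0 : 0 < a := lt_of_lt_of_le he hea
  have hb2 : 0 ≤ a^2 - e^2 := by nlinarith
  have hα0 : 0 < a - X := sub_pos.mpr hXa
  have hβ0 : 0 < a - Y := sub_pos.mpr hYa
  have hmain : (a - (a-X) - (a-Y) + (a-X)*(a-Y)) < Z := by
    rcases lt_or_ge (a - (a-X) - (a-Y) + (a-X)*(a-Y)) 0 with h | h
    · exact lt_of_lt_of_le h hZ
    · have hXY : 0 < X * Y := by
        rcases (mul_nonneg hXnn hYnn).lt_or_eq with hxy | hxy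
        · exact hxy
        · exfalso; nlinarith [mul_pos hα0 hβ0, mul_nonneg h ha0.le]
      have hGpos : 0 < (a^2-e^2) * (2*a - (a-X)) * (2*a - (a-Y))
          + e^2 * (1 - a) * (2*(X*Y) - (1-a)*((a-X)*(a-Y))) := by
        have h2 : X*Y ≤ 2*(X*Y) - (1-a)*((a-X)*(a-Y)) := by nlinarith [mul_nonneg h ha0.le]
        have hterm2 : 0 < e^2 * (1 - a) * (2*(X*Y) - (1-a)*((a-X)*(a-Y))) :=
          mul_pos (mul_pos (pow_pos he 2) (by linarith)) (lt_of_lt_of_le hXY h2)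
        have hterm1 : 0 ≤ (a^2-e^2) * (2*a - (a-X)) * (2*a - (a-Y)) :=
          mul_nonneg (mul_nonneg hb2 (by linarith)) (by linarith)
        linarith
      have hid : e^2 * a^2 * (Z^2 - (a - (a-X) - (a-Y) + (a-X)*(a-Y))^2)
          = (a-X) * (a-Y) * ((a^2-e^2) * (2*a - (a-X)) * (2*a - (a-Y))
            + e^2 * (1 - a) * (2*(X*Y) - (1-a)*((a-X)*(a-Y)))) := by
        linear_combination a^2 * hZ2
      have hsq : (a - (a-X) - (a-Y) + (a-X)*(a-Y))^2 < Z^2 := by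
        have h1 : 0 < (a-X) * (a-Y) * ((a^2-e^2) * (2*a - (a-X)) * (2*a - (a-Y))
            + e^2 * (1 - a) * (2*(X*Y) - (1-a)*((a-X)*(a-Y)))) :=
          mul_pos (mul_pos hα0 hβ0) hGpos
        nlinarith [mul_pos (pow_pos he 2) (pow_pos ha0 2)]
      by_contra hc
      push_neg at hc
      nlinarith [mul_nonneg (sub_nonneg.mpr hc) (add_nonneg hZ h)]
  linarith [hmain]

private lemma phiF_super_strict (a e τ σ : ℝ) (he : 0 < e) (hea : e ≤ a) (ha1 : a < 1)
    (hτ0 : 0 ≤ τ) (hτ1 : τ < 1) (hσ0 : 0 ≤ σ) (hσ1 : σ < 1) :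
    phiF a e τ * phiF a e σ < phiF a e (τ * σ) := by
  have ha0 : 0 < a := lt_of_lt_of_le he hea
  have hX2 : (Real.sqrt ((a^2 - e^2) + e^2 * τ))^2 = (a^2 - e^2) + e^2 * τ :=
    Real.sq_sqrt (phiF_arg_nonneg a e τ hea he hτ0)
  have hY2 : (Real.sqrt ((a^2 - e^2) + e^2 * σ))^2 = (a^2 - e^2) + e^2 * σ :=
    Real.sq_sqrt (phiF_arg_nonneg a e σ hea he hσ0)
  have hZ2 : (Real.sqrt ((a^2 - e^2) + e^2 * (τ * σ)))^2 = (a^2 - e^2) + e^2 * (τ * σ) :=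
    Real.sq_sqrt (phiF_arg_nonneg a e _ hea he (mul_nonneg hτ0 hσ0))
  have hXa : Real.sqrt ((a^2 - e^2) + e^2 * τ) < a := by
    have h1 : (a^2 - e^2) + e^2 * τ < a^2 := by nlinarith [mul_pos (pow_pos he 2) (sub_pos.mpr hτ1)]
    calc Real.sqrt ((a^2 - e^2) + e^2 * τ) < Real.sqrt (a^2) :=
      Real.sqrt_lt_sqrt (phiF_arg_nonneg a e τ hea he hτ0) h1
    _ = a := Real.sqrt_sq ha0.le
  have hYa : Real.sqrt ((a^2 - e^2) + e^2 * σ) < a := by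
    have h1 : (a^2 - e^2) + e^2 * σ < a^2 := by nlinarith [mul_pos (pow_pos he 2) (sub_pos.mpr hσ1)]
    calc Real.sqrt ((a^2 - e^2) + e^2 * σ) < Real.sqrt (a^2) :=
      Real.sqrt_lt_sqrt (phiF_arg_nonneg a e σ hea he hσ0) h1
    _ = a := Real.sqrt_sq ha0.le
  exact super_core' a e _ _ _ he hea ha1 (Real.sqrt_nonneg _) (Real.sqrt_nonneg _)
    hXa hYa (Real.sqrt_nonneg _) (by rw [hX2, hY2, hZ2]; ring)

private lemma phiF_pow (a e τ : ℝ) (he : 0 < e) (hea : e ≤ a) (ha1 : a < 1)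
    (hτ0 : 0 ≤ τ) (hτ1 : τ < 1) :
    ∀ k, 2 ≤ k → (phiF a e τ)^k < phiF a e (τ^k) := by
  intro k hk
  induction k, hk using Nat.le_induction with
  | base => rw [pow_two, pow_two]; exact phiF_super_strict a e τ τ he hea ha1 hτ0 hτ1 hτ0 hτ1
  | succ k hk ih =>
    have hτk0 : 0 ≤ τ^k := pow_nonneg hτ0 k
    have hτk1 : τ^k ≤ 1 := pow_le_one₀ hτ0 hτ1.le
    calc (phiF a e τ)^(k+1) = (phiF a e τ)^k * phiF a e τ := by ring
    _ < phiF a e (τ^k) * phiF a e τ :=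
        mul_lt_mul_of_pos_right ih (phiF_pos a e τ ha1)
    _ ≤ phiF a e (τ^k * τ) := phiF_super a e (τ^k) τ he hea ha1 hτk0 hτk1 hτ0 hτ1.le
    _ = phiF a e (τ^(k+1)) := by rw [← pow_succ]



private lemma amgm (A B g : ℝ) (hA : 0 ≤ A) (hB : 0 ≤ B) (hg : 0 ≤ g) (h : A * B = g^2) :
    2 * g ≤ A + B := by nlinarith [sq_nonneg (A - B), sq_nonneg (A + B - 2*g)]

private lemma c1 (n : ℕ) (q : ℝ) (hq0 : 0 ≤ q) (hq1 : q ≤ 1) :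
    4^(2*n) * (q*(1-q))^(2*n+1) ≤ majVote (2*n+1) q * (1 - majVote (2*n+1) q) := by
  set m := 2*n+1 with hm
  have hq1' : 0 ≤ 1 - q := by linarith
  set t : ℕ → ℝ := fun j => (m.choose j : ℝ) * q ^ j * (1 - q) ^ (m - j) with ht
  set r : ℕ → ℝ := fun j => (m.choose j : ℝ) * q ^ (m - j) * (1 - q) ^ j with hr
  set H := Finset.Ico (n+1) (m+1) with hH
  -- majVote = ∑_{H} t
  have hMdef : majVote m q = ∑ j ∈ H, t j := by
    unfold majVote
    have h2 : m / 2 + 1 = n + 1 := by omega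
    rw [h2]
  -- total sum is 1
  have hsum1 : ∑ j ∈ Finset.range (m+1), t j = 1 := by
    have hb := add_pow q (1-q) m
    simp only [add_sub_cancel, one_pow] at hb
    have hcg : ∑ j ∈ Finset.range (m+1), t j
        = ∑ j ∈ Finset.range (m+1), q ^ j * (1-q) ^ (m-j) * (m.choose j : ℝ) := by
      apply Finset.sum_congr rfl
      intro j _
      simp only [ht]
      ring
    rw [hcg, ← hb]
  -- complement
  have hcompl : 1 - majVote m q = ∑ j ∈ Finset.range (n+1), t j := by
    have hsplit : (∑ j ∈ Finset.Ico 0 (n+1), t j) + (∑ j ∈ Finset.Ico (n+1) (m+1), t j)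
        = ∑ j ∈ Finset.Ico 0 (m+1), t j :=
      Finset.sum_Ico_consecutive t (by omega) (by omega)
    rw [hMdef]
    have e1 : Finset.range (n+1) = Finset.Ico 0 (n+1) := by rw [Finset.range_eq_Ico]
    have e2 : Finset.range (m+1) = Finset.Ico 0 (m+1) := by rw [Finset.range_eq_Ico]
    rw [e1]
    rw [e2] at hsum1
    linarith [hsplit, hsum1]
  -- reflection
  have hrefl : ∑ j ∈ Finset.range (n+1), t j = ∑ j ∈ H, r j := by
    apply Finset.sum_nbij' (i := fun j => m - j) (j := fun j => m - j)
    · intro a ha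
      simp only [Finset.mem_range] at ha
      simp only [hH, Finset.mem_Ico]
      omega
    · intro a ha
      simp only [hH, Finset.mem_Ico] at ha
      simp only [Finset.mem_range]
      omega
    · intro a ha
      simp only [Finset.mem_range] at ha
      omega
    · intro a ha
      simp only [hH, Finset.mem_Ico] at ha
      omega
    · intro a ha
      simp only [Finset.mem_range] at ha
      have haa : a ≤ m := by omega
      simp only [ht, hr]
      rw [Nat.choose_symm haa]
      have : m - (m - a) = a := by omega
      rw [this]
  -- product as double sum
  have h1M : 1 - majVote m q = ∑ j ∈ H, r j := hcompl.trans hrefl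
  have hprod : majVote m q * (1 - majVote m q) = ∑ i ∈ H, ∑ j ∈ H, t i * r j := by
    rw [h1M, hMdef, Finset.sum_mul_sum]
  -- pointwise AM-GM
  have hpoint : ∀ i ∈ H, ∀ j ∈ H,
      2 * (((m.choose i : ℝ) * (m.choose j : ℝ)) * (q*(1-q))^m) ≤ t i * r j + t j * r i := by
    intro i hi j hj
    simp only [hH, Finset.mem_Ico] at hi hj
    have him : i ≤ m := by omega
    have hjm : j ≤ m := by omega
    have htri : ∀ k, k ≤ m → t k * r k = (m.choose k : ℝ)^2 * (q*(1-q))^m := by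
      intro k hk
      simp only [ht, hr]
      have e1 : q ^ k * q ^ (m-k) = q ^ m := by rw [← pow_add]; congr 1; omega
      have e2 : (1-q) ^ (m-k) * (1-q) ^ k = (1-q) ^ m := by rw [← pow_add]; congr 1; omega
      calc (m.choose k : ℝ) * q ^ k * (1 - q) ^ (m - k) * ((m.choose k : ℝ) * q ^ (m - k) * (1 - q) ^ k)
          = (m.choose k : ℝ)^2 * (q ^ k * q ^ (m-k)) * ((1-q) ^ (m-k) * (1-q) ^ k) := by ring
        _ = (m.choose k : ℝ)^2 * q ^ m * (1-q) ^ m := by rw [e1, e2]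
        _ = (m.choose k : ℝ)^2 * (q*(1-q))^m := by rw [mul_pow]; ring
    have htnn : ∀ k, 0 ≤ t k := fun k =>
      mul_nonneg (mul_nonneg (Nat.cast_nonneg _) (pow_nonneg hq0 _)) (pow_nonneg hq1' _)
    have hrnn : ∀ k, 0 ≤ r k := fun k =>
      mul_nonneg (mul_nonneg (Nat.cast_nonneg _) (pow_nonneg hq0 _)) (pow_nonneg hq1' _)
    apply amgm
    · exact mul_nonneg (htnn i) (hrnn j)
    · exact mul_nonneg (htnn j) (hrnn i)
    · exact mul_nonneg (mul_nonneg (Nat.cast_nonneg _) (Nat.cast_nonneg _))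
        (pow_nonneg (mul_nonneg hq0 hq1') _)
    · calc t i * r j * (t j * r i) = (t i * r i) * (t j * r j) := by ring
      _ = ((m.choose i : ℝ)^2 * (q*(1-q))^m) * ((m.choose j : ℝ)^2 * (q*(1-q))^m) := by
          rw [htri i him, htri j hjm]
      _ = ((m.choose i : ℝ) * (m.choose j : ℝ) * (q*(1-q))^m)^2 := by ring
  -- sum of binomials over H
  have hC : ∑ j ∈ H, (m.choose j : ℝ) = 4^n := by
    have h1 : ∑ j ∈ Finset.range (n+1), m.choose j = 4^n := by
      have := Nat.sum_range_choose_halfway n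
      rw [hm]; exact this
    have h2 : ∑ j ∈ Finset.range (m+1), m.choose j = 2^m := Nat.sum_range_choose m
    have hsplit : (∑ j ∈ Finset.range (n+1), m.choose j) + (∑ j ∈ H, m.choose j)
        = ∑ j ∈ Finset.range (m+1), m.choose j := by
      simp only [Finset.range_eq_Ico, hH]
      exact Finset.sum_Ico_consecutive _ (by omega) (by omega)
    have h2m : (2:ℕ)^m = 4^n * 2 := by
      rw [hm, pow_succ, pow_mul]; norm_num
    have hnat : ∑ j ∈ H, m.choose j = 4^n := by omega
    exact_mod_cast hnat
  -- assemble
  have hswap : ∑ i ∈ H, ∑ j ∈ H, t j * r i = ∑ i ∈ H, ∑ j ∈ H, t i * r j := Finset.sum_comm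
  have hdouble : ∑ i ∈ H, ∑ j ∈ H, (t i * r j + t j * r i)
      = 2 * (majVote m q * (1 - majVote m q)) := by
    have : ∑ i ∈ H, ∑ j ∈ H, (t i * r j + t j * r i)
        = (∑ i ∈ H, ∑ j ∈ H, t i * r j) + (∑ i ∈ H, ∑ j ∈ H, t j * r i) := by
      rw [← Finset.sum_add_distrib]
      apply Finset.sum_congr rfl
      intro i _
      rw [← Finset.sum_add_distrib]
    rw [this, hswap, hprod]; ring
  have hbound : ∑ i ∈ H, ∑ j ∈ H, 2 * (((m.choose i : ℝ) * (m.choose j : ℝ)) * (q*(1-q))^m)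
      ≤ ∑ i ∈ H, ∑ j ∈ H, (t i * r j + t j * r i) := by
    apply Finset.sum_le_sum
    intro i hi
    apply Finset.sum_le_sum
    intro j hj
    exact hpoint i hi j hj
  have hgsum : ∑ i ∈ H, ∑ j ∈ H, 2 * (((m.choose i : ℝ) * (m.choose j : ℝ)) * (q*(1-q))^m)
      = 2 * (4^(2*n) * (q*(1-q))^m) := by
    have hinner : ∀ i ∈ H, ∑ j ∈ H, 2 * (((m.choose i : ℝ) * (m.choose j : ℝ)) * (q*(1-q))^m)
        = (2 * (m.choose i : ℝ) * (q*(1-q))^m) * (4:ℝ)^n := by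
      intro i _
      rw [← hC, Finset.mul_sum]
      apply Finset.sum_congr rfl
      intro j _
      ring
    rw [Finset.sum_congr rfl hinner, ← Finset.sum_mul]
    have houter : ∑ i ∈ H, 2 * (m.choose i : ℝ) * (q*(1-q))^m
        = 2 * (q*(1-q))^m * (4:ℝ)^n := by
      rw [← hC, Finset.mul_sum]
      apply Finset.sum_congr rfl
      intro j _
      ring
    rw [houter]
    have h4 : (4:ℝ)^n * 4^n = 4^(2*n) := by rw [← pow_add]; congr 1; omega
    linear_combination 2 * (q*(1-q))^m * h4
  linarith [hbound, hdouble.symm.trans_le (le_of_eq rfl), hgsum.symm.le, hgsum.ge, hdouble.le, hdouble.ge, hgsum.le]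

/-- Independent case of the Cramér-rate comparison: for `p ∈ [1/2, 1)`,
`ε ∈ (0, 1-p]`, `q ∈ (1/2, 1]` and odd `m ≥ 3`, with
`d = ε(1-p-ε)p + ((1-p-ε)p)²` and `c = 1 - ε - 2p(1-p-ε)`,
`log(2√(M_m(q)(1-M_m(q)) ε² + d) + c) > m log(2√(q(1-q) ε² + d) + c)`. -/
theorem stmt_11 (p ε q : ℝ) (hp : p ∈ Set.Ico (1 / 2 : ℝ) 1)
    (hε : ε ∈ Set.Ioc (0 : ℝ) (1 - p)) (hq : q ∈ Set.Ioc (1 / 2 : ℝ) 1)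
    (m : ℕ) (hm : Odd m) (hm3 : 3 ≤ m)
    (d c : ℝ) (hd : d = ε * ((1 - p - ε) * p) + ((1 - p - ε) * p) ^ 2)
    (hc : c = 1 - ε - 2 * p * (1 - p - ε)) :
    Real.log (2 * Real.sqrt (majVote m q * (1 - majVote m q) * ε ^ 2 + d) + c) >
      (m : ℝ) * Real.log (2 * Real.sqrt (q * (1 - q) * ε ^ 2 + d) + c) := by
  obtain ⟨hp1, hp2⟩ := hp
  obtain ⟨he1, he2⟩ := hε
  obtain ⟨hq1, hq2⟩ := hq
  obtain ⟨n, hn⟩ := hm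
  have hn1 : 1 ≤ n := by omega
  set a : ℝ := ε + 2 * ((1 - p - ε) * p) with ha_def
  have hr0 : 0 ≤ (1 - p - ε) * p := mul_nonneg (by linarith) (by linarith)
  have hea : ε ≤ a := by rw [ha_def]; linarith
  have ha12 : a ≤ 1/2 := by
    rw [ha_def]
    nlinarith [sq_nonneg (2*p - 1), mul_nonneg he1.le (by linarith : (0:ℝ) ≤ 2*p - 1)]
  have ha1 : a < 1 := by linarith
  have hca : c = 1 - a := by rw [hc, ha_def]; ring
  have hd4 : a^2 - ε^2 = 4 * d := by rw [ha_def, hd]; ring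
  have hq0 : 0 ≤ q := by linarith
  have hq1' : 0 ≤ 1 - q := by linarith
  set τ : ℝ := 4 * (q * (1 - q)) with hτ_def
  have hτ0 : 0 ≤ τ := by positivity
  have hτ1 : τ < 1 := by nlinarith [mul_pos (by linarith : (0:ℝ) < 2*q - 1) (by linarith : (0:ℝ) < 2*q - 1)]
  -- rewrite the two log arguments as phiF
  have hsqrt4 : ∀ X : ℝ, Real.sqrt (4 * X) = 2 * Real.sqrt X := by
    intro X
    rw [show (4:ℝ) = 2^2 by norm_num, Real.sqrt_mul (by positivity) X, Real.sqrt_sq (by norm_num : (0:ℝ) ≤ 2)]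
  have hRHS : 2 * Real.sqrt (q * (1 - q) * ε ^ 2 + d) + c = phiF a ε τ := by
    unfold phiF
    have harg : (a^2 - ε^2) + ε^2 * τ = 4 * (q * (1 - q) * ε ^ 2 + d) := by
      rw [hd4, hτ_def]; ring
    rw [harg, hsqrt4, hca]; ring
  have hLHS : 2 * Real.sqrt (majVote m q * (1 - majVote m q) * ε ^ 2 + d) + c
      = phiF a ε (4 * (majVote m q * (1 - majVote m q))) := by
    unfold phiF
    have harg : (a^2 - ε^2) + ε^2 * (4 * (majVote m q * (1 - majVote m q)))
        = 4 * (majVote m q * (1 - majVote m q) * ε ^ 2 + d) := by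
      rw [hd4]; ring
    rw [harg, hsqrt4, hca]; ring
  -- C1 : τ^m ≤ 4 M (1-M)
  have hτM : τ^m ≤ 4 * (majVote m q * (1 - majVote m q)) := by
    have h1 := c1 n q hq0 hq2
    rw [← hn] at h1
    have h2 : τ^m = 4 * (4^(2*n) * (q*(1-q))^m) := by
      rw [hτ_def, mul_pow, hn]
      rw [show 2*n+1 = (2*n)+1 by rfl, pow_succ (4:ℝ) (2*n)]
      ring
    rw [h2]
    linarith
  -- chain
  have hchain : phiF a ε τ ^ m < phiF a ε (4 * (majVote m q * (1 - majVote m q))) :=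
    lt_of_lt_of_le (phiF_pow a ε τ he1 hea ha1 hτ0 hτ1 m (by omega))
      (phiF_mono a ε (τ^m) _ hτM he1.le)
  have hpos : 0 < phiF a ε τ := phiF_pos a ε τ ha1
  rw [hLHS, hRHS, ← Real.log_pow]
  exact Real.log_lt_log (pow_pos hpos m) hchain
end

section
/- For every odd integer $m \ge 3$ and every $q \in (1/2, 1]$: $\big(1 + 2\sigma(m,q)\big) \binom{m-1}{(m-1)/2} q^{(m+1)/2} (1-q)^{(m+1)/2} \le M_m(q)\big(1 - M_m(q)\big)$, where $\sigma(m,q) := \sum_{k \text{ odd},\, 1 \le k \le m-2} \binom{k}{(k+1)/2} q^{(k+1)/2} (1-q)^{(k+1)/2}$. -/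
/-- The partial sum of central binomial coefficients: `P_n(x) = ∑_{j=0}^n C(2j,j) x^j`. -/
noncomputable def PP (n : ℕ) (x : ℝ) : ℝ :=
  ∑ j ∈ Finset.range (n+1), (Nat.centralBinom j : ℝ) * x ^ j

/-- The derivative of `PP n`. -/
noncomputable def dPP (n : ℕ) (x : ℝ) : ℝ :=
  ∑ j ∈ Finset.range (n+1), (Nat.centralBinom j : ℝ) * ((j : ℝ) * x ^ (j-1))

/-- The key auxiliary function whose nonnegativity on `[0,∞)` is the heart of the proof. -/
noncomputable def hFun (n : ℕ) (x : ℝ) : ℝ :=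
  1 - (1 - 4*x) * (PP n x)^2 - 4 * (Nat.centralBinom n : ℝ) * x^(n+1) * PP n x

/-- One Pascal step for upper binomial tails. -/
lemma stepA (m r : ℕ) (hr : 1 ≤ r) (hrm : r ≤ m + 1) (q : ℝ) :
    ∑ j ∈ Finset.Ico r (m+2), ((m+1).choose j : ℝ) * q^j * (1-q)^(m+1-j)
    = ∑ j ∈ Finset.Ico r (m+1), (m.choose j : ℝ) * q^j * (1-q)^(m-j)
      + (m.choose (r-1) : ℝ) * q^r * (1-q)^(m+1-r) := by
  obtain ⟨r, rfl⟩ : ∃ r', r = r' + 1 := ⟨r - 1, by omega⟩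
  have hre : Finset.Ico (r+1) (m+2) = Finset.map ⟨fun i => i + 1, add_left_injective 1⟩ (Finset.Ico r (m+1)) := by
    ext j
    simp only [Finset.mem_Ico, Finset.mem_map, Function.Embedding.coeFn_mk]
    constructor
    · intro h
      exact ⟨j - 1, by omega, by omega⟩
    · rintro ⟨a, ha, rfl⟩
      omega
  rw [hre, Finset.sum_map]
  simp only [Function.Embedding.coeFn_mk]
  have step : ∀ i ∈ Finset.Ico r (m+1),
      ((m+1).choose (i+1) : ℝ) * q^(i+1) * (1-q)^(m+1-(i+1))
      = q * ((m.choose i : ℝ) * q^i * (1-q)^(m-i))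
        + (1-q) * ((m.choose (i+1) : ℝ) * q^(i+1) * (1-q)^(m-(i+1))) := by
    intro i hi
    simp only [Finset.mem_Ico] at hi
    rw [Nat.choose_succ_succ]
    rcases Nat.lt_or_ge i m with him | him
    · have h1 : m + 1 - (i+1) = (m - (i+1)) + 1 := by omega
      have h2 : m - i = (m - (i+1)) + 1 := by omega
      rw [h1, h2]
      push_cast
      ring
    · have him' : i = m := by omega
      subst him'
      simp [Nat.choose_succ_self]
      ring
  rw [Finset.sum_congr rfl step, Finset.sum_add_distrib, ← Finset.mul_sum, ← Finset.mul_sum]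
  have h2 : ∑ i ∈ Finset.Ico r (m+1), (m.choose (i+1) : ℝ) * q^(i+1) * (1-q)^(m-(i+1))
      = ∑ j ∈ Finset.Ico (r+1) (m+1), (m.choose j : ℝ) * q^j * (1-q)^(m-j) := by
    have hs := Finset.sum_map (Finset.Ico r (m+1)) ⟨fun i => i + 1, add_left_injective 1⟩
      (fun j => (m.choose j : ℝ) * q^j * (1-q)^(m-j))
    simp only [Function.Embedding.coeFn_mk] at hs
    rw [← hs, ← hre, show m + 2 = (m+1) + 1 from rfl,
      Finset.sum_Ico_succ_top (by omega), Nat.choose_succ_self]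
    simp
  rw [h2]
  have h1 : ∑ i ∈ Finset.Ico r (m+1), (m.choose i : ℝ) * q^i * (1-q)^(m-i)
      = (m.choose r : ℝ) * q^r * (1-q)^(m-r)
        + ∑ j ∈ Finset.Ico (r+1) (m+1), (m.choose j : ℝ) * q^j * (1-q)^(m-j) := by
    rw [Finset.sum_eq_sum_Ico_succ_bot (by omega)]
  rw [h1]
  have : m + 1 - (r+1) = m - r := by omega
  rw [this, Nat.add_sub_cancel]
  ring

/-- `C(2(n+1), n+1) = 2 C(2n+1, n+1)` over `ℝ`. -/
lemma central_cast (n : ℕ) : (Nat.centralBinom (n+1) : ℝ) = 2 * ((2*n+1).choose (n+1) : ℝ) := by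
  have h1 : (2*n+1).choose n = (2*n+1).choose (n+1) := by
    have := Nat.choose_symm (n := 2*n+1) (k := n+1) (by omega)
    rwa [show 2*n+1 - (n+1) = n by omega] at this
  have h2 : Nat.centralBinom (n+1) = (2*n+1).choose n + (2*n+1).choose (n+1) := by
    rw [Nat.centralBinom_eq_two_mul_choose, show 2*(n+1) = (2*n+1)+1 by ring,
      Nat.choose_succ_succ]
  rw [h2, h1]
  push_cast
  ring

/-- The majority-vote accuracy in terms of `PP`. -/
lemma majVote_eq (n : ℕ) (q : ℝ) :
    majVote (2*n+1) q = (1 + (2*q-1) * PP n (q*(1-q))) / 2 := by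
  induction n with
  | zero =>
    rw [majVote, PP]
    norm_num [Nat.centralBinom]
  | succ n ih =>
    rw [majVote]
    rw [show 2*(n+1)+1 = (2*n+2)+1 by ring, show ((2*n+2)+1)/2 + 1 = n+2 by omega,
      show (2*n+2)+1+1 = (2*n+2)+2 by ring,
      stepA (2*n+2) (n+2) (by omega) (by omega) q,
      show (2*n+2) = (2*n+1)+1 from rfl,
      show ((2*n+1)+1)+1 = (2*n+1)+2 from rfl,
      stepA (2*n+1) (n+2) (by omega) (by omega) q]
    have hsplit : ∑ j ∈ Finset.Ico (n+1) (2*n+1+1), ((2*n+1).choose j : ℝ) * q^j * (1-q)^(2*n+1-j)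
        = ((2*n+1).choose (n+1) : ℝ) * q^(n+1) * (1-q)^(2*n+1-(n+1))
          + ∑ j ∈ Finset.Ico (n+2) (2*n+1+1), ((2*n+1).choose j : ℝ) * q^j * (1-q)^(2*n+1-j) :=
      Finset.sum_eq_sum_Ico_succ_bot (by omega) _
    have hM : majVote (2*n+1) q
        = ∑ j ∈ Finset.Ico (n+1) (2*n+1+1), ((2*n+1).choose j : ℝ) * q^j * (1-q)^(2*n+1-j) := by
      rw [majVote, show (2*n+1)/2 + 1 = n+1 by omega]
    rw [show n+2-1 = n+1 from rfl]
    have hsum : ∑ j ∈ Finset.Ico (n+2) (2*n+1+1), ((2*n+1).choose j : ℝ) * q^j * (1-q)^(2*n+1-j)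
        = majVote (2*n+1) q - ((2*n+1).choose (n+1) : ℝ) * q^(n+1) * (1-q)^(2*n+1-(n+1)) := by
      rw [hM, hsplit]; ring
    have hPP : PP (n+1) (q*(1-q))
        = PP n (q*(1-q)) + (Nat.centralBinom (n+1) : ℝ) * (q*(1-q))^(n+1) := by
      simp only [PP, Finset.sum_range_succ]
    rw [hsum, ih, hPP]
    rw [show 2*n+1-(n+1) = n by omega, show (2*n+1)+1-(n+2) = n by omega,
      show (2*n+1)+2-(n+2) = n+1 by omega, central_cast n]
    have hmp : (q*(1-q))^(n+1) = q^(n+1) * (1-q)^(n+1) := mul_pow _ _ _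
    have hcc : ((2*n+1+1).choose (n+1) : ℝ) = 2 * ((2*n+1).choose (n+1) : ℝ) := by
      rw [show 2*n+1+1 = 2*(n+1) by ring, ← Nat.centralBinom_eq_two_mul_choose, central_cast n]
    rw [hmp] at hPP ⊢
    rw [central_cast n] at hPP
    rw [hcc]
    ring

/-- The sigma sum in terms of `PP`. -/
lemma sigma_eq (n : ℕ) (q : ℝ) :
    1 + 2 * sigmaFun (2*n+1) q = PP n (q*(1-q)) := by
  induction n with
  | zero =>
    rw [sigmaFun, PP]
    norm_num [Nat.centralBinom]
  | succ n ih =>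
    have hset : (Finset.Icc 1 (2*(n+1)+1-2)).filter (fun k => k % 2 = 1)
        = insert (2*n+1) ((Finset.Icc 1 (2*n+1-2)).filter (fun k => k % 2 = 1)) := by
      ext k
      simp only [Finset.mem_filter, Finset.mem_Icc, Finset.mem_insert]
      omega
    have hnot : (2*n+1) ∉ (Finset.Icc 1 (2*n+1-2)).filter (fun k => k % 2 = 1) := by
      simp only [Finset.mem_filter, Finset.mem_Icc]
      omega
    rw [sigmaFun, hset, Finset.sum_insert hnot, ← sigmaFun]
    have hPP : PP (n+1) (q*(1-q))
        = PP n (q*(1-q)) + (Nat.centralBinom (n+1) : ℝ) * (q*(1-q))^(n+1) := by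
      simp only [PP, Finset.sum_range_succ]
    rw [hPP, ← ih, show (2*n+1+1)/2 = n+1 by omega, central_cast n, mul_pow]
    ring

lemma hasDerivAt_PP (n : ℕ) (x : ℝ) : HasDerivAt (fun y => PP n y) (dPP n x) x := by
  simp only [PP, dPP]
  exact HasDerivAt.fun_sum fun j _ => (hasDerivAt_pow j x).const_mul _

/-- `(1-4x) P_n'(x) = 2 P_n(x) - (4n+2) C(2n,n) x^n`. -/
lemma key_ident (n : ℕ) (x : ℝ) :
    (1 - 4*x) * dPP n x = 2 * PP n x - (4*(n:ℝ)+2) * (Nat.centralBinom n : ℝ) * x^n := by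
  induction n with
  | zero => norm_num [PP, dPP, Nat.centralBinom]
  | succ n ih =>
    have hb : ((n:ℝ)+1) * (Nat.centralBinom (n+1) : ℝ)
        = (2*(2*(n:ℝ)+1)) * (Nat.centralBinom n : ℝ) := by
      exact_mod_cast congrArg (fun k : ℕ => (k : ℝ)) (Nat.succ_mul_centralBinom_succ n)
    simp only [PP, dPP, Finset.sum_range_succ] at ih ⊢
    push_cast at ih hb ⊢
    linear_combination ih + x^n * hb

lemma PP_zero (n : ℕ) : PP n 0 = 1 := by
  rw [PP, Finset.sum_eq_single 0]
  · simp [Nat.centralBinom]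
  · intro j _ hj
    rcases Nat.exists_eq_succ_of_ne_zero hj with ⟨k, rfl⟩
    simp [zero_pow]
  · intro h
    simp at h

lemma nP_sub (n : ℕ) (y : ℝ) (hy : 0 ≤ y) :
    0 ≤ (n : ℝ) * PP n y - y * dPP n y := by
  rw [PP, dPP, Finset.mul_sum, Finset.mul_sum, ← Finset.sum_sub_distrib]
  apply Finset.sum_nonneg
  intro j hj
  simp only [Finset.mem_range] at hj
  have hterm : (n:ℝ) * ((Nat.centralBinom j : ℝ) * y^j)
      - y * ((Nat.centralBinom j : ℝ) * ((j:ℝ) * y^(j-1)))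
      = ((n:ℝ) - j) * ((Nat.centralBinom j : ℝ) * y^j) := by
    cases j with
    | zero => simp
    | succ k =>
      simp only [Nat.add_sub_cancel]
      push_cast
      ring
  rw [hterm]
  have h1 : (0:ℝ) ≤ (n:ℝ) - j := by
    have : (j:ℝ) ≤ n := by exact_mod_cast Nat.le_of_lt_succ hj
    linarith
  positivity

lemma hasDerivAt_hFun (n : ℕ) (y : ℝ) :
    HasDerivAt (hFun n)
      (4 * (Nat.centralBinom n : ℝ) * y^n * ((n:ℝ) * PP n y - y * dPP n y)) y := by
  have hP := hasDerivAt_PP n y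
  have h1 : HasDerivAt (fun t : ℝ => 1 - 4*t) (-4) y := by
    simpa using (((hasDerivAt_id y).const_mul (4:ℝ)).const_sub 1)
  have hsq : HasDerivAt (fun t => (PP n t)^2) (2 * PP n y ^ 1 * dPP n y) y := hP.pow 2
  have hterm1 := h1.mul hsq
  have hpow : HasDerivAt (fun t : ℝ => t^(n+1)) (((n:ℝ)+1) * y^n) y := by
    simpa using hasDerivAt_pow (n+1) y
  have hterm2 := ((hpow.const_mul (4 * (Nat.centralBinom n : ℝ))).mul hP)
  have hh := ((hterm1.add hterm2).const_sub 1)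
  have hk := key_ident n y
  have hval : -(-4 * PP n y ^ 2 + (1 - 4 * y) * (2 * PP n y ^ 1 * dPP n y) +
        (4 * (Nat.centralBinom n : ℝ) * (((n:ℝ) + 1) * y ^ n) * PP n y
          + 4 * (Nat.centralBinom n : ℝ) * y ^ (n + 1) * dPP n y))
      = 4 * (Nat.centralBinom n : ℝ) * y^n * ((n:ℝ) * PP n y - y * dPP n y) := by
    linear_combination (-2 * PP n y) * hk
  rw [← hval]
  have hfe : hFun n = fun x => 1 - ((1 - 4*x) * (PP n x)^2
      + 4 * (Nat.centralBinom n : ℝ) * x^(n+1) * PP n x) := by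
    funext t
    simp only [hFun]
    ring
  rw [hfe]
  exact hh

lemma hFun_nonneg (n : ℕ) (x : ℝ) (hx : 0 ≤ x) : 0 ≤ hFun n x := by
  have hmono : MonotoneOn (hFun n) (Set.Ici 0) := by
    apply monotoneOn_of_deriv_nonneg (convex_Ici 0)
    · exact fun y _ => (hasDerivAt_hFun n y).continuousAt.continuousWithinAt
    · exact fun y _ => (hasDerivAt_hFun n y).differentiableAt.differentiableWithinAt
    · intro y hy
      rw [interior_Ici, Set.mem_Ioi] at hy
      rw [(hasDerivAt_hFun n y).deriv]
      have h1 := nP_sub n y hy.le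
      have h2 : (0:ℝ) ≤ 4 * (Nat.centralBinom n : ℝ) * y^n := by positivity
      exact mul_nonneg h2 h1
  have h0 : hFun n 0 = 0 := by
    rw [hFun, PP_zero]
    simp
  have := hmono Set.self_mem_Ici hx hx
  linarith

/-- For every odd `m ≥ 3` and `q ∈ (1/2, 1]`:
`(1 + 2σ(m,q)) C(m-1, (m-1)/2) q^((m+1)/2) (1-q)^((m+1)/2) ≤ M_m(q)(1 - M_m(q))`. -/
theorem stmt_12 (m : ℕ) (hm : Odd m) (hm3 : 3 ≤ m) (q : ℝ)
    (hq : q ∈ Set.Ioc (1 / 2 : ℝ) 1) :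
    (1 + 2 * sigmaFun m q) * ((m - 1).choose ((m - 1) / 2) : ℝ) *
        q ^ ((m + 1) / 2) * (1 - q) ^ ((m + 1) / 2) ≤
      majVote m q * (1 - majVote m q) := by
  obtain ⟨hq1, hq2⟩ := hq
  obtain ⟨n, rfl⟩ := hm
  have hx : 0 ≤ q * (1-q) := by nlinarith
  have hh := hFun_nonneg n (q*(1-q)) hx
  rw [hFun] at hh
  rw [majVote_eq n q, sigma_eq n q,
    show 2*n+1-1 = 2*n by omega, show (2*n)/2 = n by omega,
    show (2*n+1+1)/2 = n+1 by omega,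
    show ((2*n).choose n : ℝ) = (Nat.centralBinom n : ℝ) by
      rw [Nat.centralBinom_eq_two_mul_choose]]
  have hmp : (q*(1-q))^(n+1) = q^(n+1) * (1-q)^(n+1) := mul_pow _ _ _
  rw [hmp] at hh
  set P := PP n (q*(1-q))
  set b := (Nat.centralBinom n : ℝ)
  nlinarith [hh, sq_nonneg (2*q-1)]
end

section
/- For every odd integer $m \ge 3$, the function $x \mapsto \dfrac{M_m(x)\big(1 - M_m(x)\big)}{x(1-x)}$ is monotonically nonincreasing on the interval $(1/2, 1)$. Equivalently, for all $1/2 < x \le y < 1$: $M_m(y)(1-M_m(y))\, x(1-x) \le M_m(x)(1-M_m(x))\, y(1-y)$. -/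
open Finset

namespace Stmt13

noncomputable def aR (i : ℕ) : ℝ := (Nat.centralBinom i : ℝ)

noncomputable def cc (n i : ℕ) : ℝ := if i ≤ n then aR i else 0

noncomputable def qq (n k : ℕ) : ℝ := ∑ i ∈ range (k+1), cc n i * cc n (k - i)

lemma aR_nonneg (i : ℕ) : 0 ≤ aR i := Nat.cast_nonneg _

lemma cc_nonneg (n i : ℕ) : 0 ≤ cc n i := by
  unfold cc; split
  · exact aR_nonneg i
  · exact le_refl 0

lemma qq_nonneg (n k : ℕ) : 0 ≤ qq n k :=
  Finset.sum_nonneg fun i _ => mul_nonneg (cc_nonneg n i) (cc_nonneg n _)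

lemma qq_zero (n : ℕ) : qq n 0 = 1 := by
  simp [qq, cc, aR, Nat.centralBinom]

lemma qq_top (n : ℕ) : qq n (2*n+1) = 0 := by
  unfold qq
  apply Finset.sum_eq_zero
  intro i hi
  unfold cc
  rcases le_or_gt i n with h | h
  · have : ¬ (2*n+1-i ≤ n) := by omega
    simp [this]
  · have : ¬ (i ≤ n) := by omega
    simp [this]

lemma sym (n N : ℕ) :
    ∑ i ∈ range (N+1), ((N-i : ℕ):ℝ) * (cc n i * cc n (N-i))
      = ∑ i ∈ range (N+1), (i:ℝ) * (cc n i * cc n (N-i)) := by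
  rw [← Finset.sum_range_reflect]
  apply Finset.sum_congr rfl
  intro j hj
  have hjN : j ≤ N := by simpa [Nat.lt_succ_iff] using hj
  have h1 : N + 1 - 1 - j = N - j := by omega
  have h2 : N - (N - j) = j := by omega
  rw [h1, h2]
  ring

lemma split_sum (n N : ℕ) :
    ((N:ℝ)+1) * qq n N = 2 * (∑ i ∈ range (N+1), (i:ℝ) * (cc n i * cc n (N-i))) + qq n N := by
  have : ((N:ℝ)+1) * qq n N
      = ∑ i ∈ range (N+1), (((i:ℝ) * (cc n i * cc n (N-i)) + ((N-i : ℕ):ℝ) * (cc n i * cc n (N-i)))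
          + cc n i * cc n (N-i)) := by
    rw [qq, Finset.mul_sum]
    apply Finset.sum_congr rfl
    intro i hi
    have hiN : i ≤ N := by simpa [Nat.lt_succ_iff] using hi
    have : ((N - i : ℕ):ℝ) = (N:ℝ) - (i:ℝ) := by
      rw [Nat.cast_sub hiN]
    rw [this]; ring
  rw [this, Finset.sum_add_distrib, Finset.sum_add_distrib, sym, qq]
  ring

lemma qq_succ_le (n k : ℕ) : qq n (k+1) ≤ 4 * qq n k := by
  have hpos : (0:ℝ) < (k:ℝ) + 1 := by positivity
  rw [← mul_le_mul_iff_right₀ hpos]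
  -- (k+1) * qq n (k+1) = 2 * Σ_{i ∈ range (k+2)} i * cc i * cc (k+1-i)
  have h1 : ((k:ℝ)+1) * qq n (k+1)
      = 2 * (∑ i ∈ range (k+2), (i:ℝ) * (cc n i * cc n (k+1-i))) := by
    have := split_sum n (k+1)
    push_cast at this ⊢
    linarith [this]
  have h2 : ∑ i ∈ range (k+2), (i:ℝ) * (cc n i * cc n (k+1-i))
      = ∑ i ∈ range (k+1), ((i:ℝ)+1) * (cc n (i+1) * cc n (k-i)) := by
    rw [Finset.sum_range_succ']
    simp only [Nat.cast_zero, zero_mul, add_zero]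
    apply Finset.sum_congr rfl
    intro i hi
    have : k + 1 - (i+1) = k - i := by omega
    rw [this]
    push_cast
    ring
  have h3 : ∀ i : ℕ, ((i:ℝ)+1) * cc n (i+1) ≤ (4*(i:ℝ)+2) * cc n i := by
    intro i
    unfold cc
    by_cases h : i + 1 ≤ n
    · have h' : i ≤ n := by omega
      simp only [h, h', if_true]
      have : ((i:ℕ)+1 : ℝ) * aR (i+1) = (4*(i:ℝ)+2) * aR i := by
        unfold aR
        have := Nat.succ_mul_centralBinom_succ i
        have hc : ((i+1) * Nat.centralBinom (i+1) : ℝ) = (2 * (2*i+1) * Nat.centralBinom i : ℝ) := by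
          exact_mod_cast congrArg (Nat.cast : ℕ → ℝ) this
        push_cast at hc
        push_cast
        linarith [hc]
      exact le_of_eq (by push_cast at this ⊢; linarith [this])
    · simp only [h, if_false, mul_zero]
      have h0 : (0:ℝ) ≤ if i ≤ n then aR i else 0 := by
        split
        · exact aR_nonneg i
        · exact le_refl 0
      have h1 : (0:ℝ) ≤ 4*(i:ℝ)+2 := by positivity
      exact mul_nonneg h1 h0
  have h4 : ∑ i ∈ range (k+1), ((i:ℝ)+1) * (cc n (i+1) * cc n (k-i))
      ≤ ∑ i ∈ range (k+1), ((4*(i:ℝ)+2)) * (cc n i * cc n (k-i)) := by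
    apply Finset.sum_le_sum
    intro i hi
    have := mul_le_mul_of_nonneg_right (h3 i) (cc_nonneg n (k-i))
    calc ((i:ℝ)+1) * (cc n (i+1) * cc n (k-i)) = (((i:ℝ)+1) * cc n (i+1)) * cc n (k-i) := by ring
    _ ≤ ((4*(i:ℝ)+2) * cc n i) * cc n (k-i) := this
    _ = (4*(i:ℝ)+2) * (cc n i * cc n (k-i)) := by ring
  have h5 : ∑ i ∈ range (k+1), ((4*(i:ℝ)+2)) * (cc n i * cc n (k-i))
      = 2 * (((k:ℝ)+1) * qq n k) := by
    have hs := split_sum n k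
    have heach : ∀ i ∈ range (k+1), ((4*(i:ℝ)+2)) * (cc n i * cc n (k-i))
        = 4 * ((i:ℝ) * (cc n i * cc n (k-i))) + 2 * (cc n i * cc n (k-i)) := fun i _ => by ring
    rw [Finset.sum_congr rfl heach, Finset.sum_add_distrib, ← Finset.mul_sum, ← Finset.mul_sum, ← qq]
    linarith [hs]
  calc ((k:ℝ)+1) * qq n (k+1) = 2 * (∑ i ∈ range (k+2), (i:ℝ) * (cc n i * cc n (k+1-i))) := h1
  _ = 2 * (∑ i ∈ range (k+1), ((i:ℝ)+1) * (cc n (i+1) * cc n (k-i))) := by rw [h2]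
  _ ≤ 2 * (∑ i ∈ range (k+1), ((4*(i:ℝ)+2)) * (cc n i * cc n (k-i))) := by linarith [h4]
  _ = ((k:ℝ)+1) * (4 * qq n k) := by rw [h5]; ring

noncomputable def Tf (n : ℕ) (t : ℝ) : ℝ := ∑ i ∈ range (n+1), aR i * t ^ i

noncomputable def Sf (n : ℕ) (t : ℝ) : ℝ := ∑ j ∈ Icc 1 n, ((2*j-1).choose j : ℝ) * t ^ j

noncomputable def Rf (n : ℕ) (t : ℝ) : ℝ := ∑ k ∈ range (2*n), qq n (k+1) * t ^ k

lemma sq_Tf (n : ℕ) (t : ℝ) :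
    (Tf n t)^2 = ∑ k ∈ range (2*n+1), qq n k * t^k := by
  classical
  set p : Polynomial ℝ := ∑ i ∈ range (n+1), Polynomial.C (aR i) * Polynomial.X ^ i with hp
  have hcoeff : ∀ j, p.coeff j = cc n j := by
    intro j
    rw [hp, Polynomial.finset_sum_coeff]
    simp only [Polynomial.coeff_C_mul, Polynomial.coeff_X_pow]
    rw [Finset.sum_congr rfl (fun i _ => by
      rw [show aR i * (if j = i then (1:ℝ) else 0) = (if j = i then aR i else 0) from by
        split <;> simp])]
    rw [Finset.sum_ite_eq]
    simp only [Finset.mem_range, Nat.lt_succ_iff]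
    unfold cc
    split <;> simp_all
  have hdeg : p.natDegree ≤ n := by
    apply Polynomial.natDegree_sum_le_of_forall_le
    intro i hi
    exact le_trans (Polynomial.natDegree_C_mul_X_pow_le _ _)
      (by simpa [Nat.lt_succ_iff] using hi)
  have hdeg2 : (p*p).natDegree < 2*n+1 := by
    have := Polynomial.natDegree_mul_le (p := p) (q := p)
    omega
  have heval : p.eval t = Tf n t := by
    simp [hp, Tf, Polynomial.eval_finset_sum]
  have hcoeff2 : ∀ k, (p*p).coeff k = qq n k := by
    intro k
    rw [Polynomial.coeff_mul, Finset.Nat.sum_antidiagonal_eq_sum_range_succ_mk]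
    unfold qq
    exact Finset.sum_congr rfl fun i _ => by rw [hcoeff, hcoeff]
  have := Polynomial.eval_eq_sum_range' hdeg2 t
  rw [Polynomial.eval_mul, heval] at this
  rw [show (Tf n t)^2 = Tf n t * Tf n t from sq (Tf n t) ▸ rfl]
  rw [this]
  exact Finset.sum_congr rfl fun k _ => by rw [hcoeff2]

lemma Tf_eq (n : ℕ) (t : ℝ) : Tf n t = 1 + 2 * Sf n t := by
  unfold Tf Sf
  rw [Finset.sum_range_succ']
  have h1 : ∑ j ∈ Icc 1 n, ((2*j-1).choose j : ℝ) * t ^ j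
      = ∑ i ∈ range n, ((2*(1+i)-1).choose (1+i) : ℝ) * t ^ (1+i) := by
    rw [show Icc 1 n = Ico 1 (n+1) from by rw [← Finset.Ico_add_one_right_eq_Icc]]
    rw [Finset.sum_Ico_eq_sum_range]
    simp
  rw [h1]
  have h2 : ∀ i ∈ range n, aR (i+1) * t^(i+1) = 2 * (((2*(1+i)-1).choose (1+i) : ℝ) * t ^ (1+i)) := by
    intro i hi
    have key : Nat.centralBinom (i+1) = 2 * (2*i+1).choose (i+1) := by
      unfold Nat.centralBinom
      have h3 : 2*(i+1) = (2*i+1)+1 := by omega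
      rw [h3, Nat.choose_succ_succ']
      have h4 : (2*i+1).choose i = (2*i+1).choose (i+1) := by
        have := Nat.choose_symm (show i+1 ≤ 2*i+1 from by omega)
        simpa [show 2*i+1-(i+1) = i from by omega] using this
      omega
    unfold aR
    rw [key]
    have h5 : 2*(1+i)-1 = 2*i+1 := by omega
    rw [h5]
    push_cast
    ring_nf
  rw [Finset.sum_congr rfl h2, ← Finset.mul_sum]
  simp [aR, Nat.centralBinom]
  ring

lemma onestep (l' N : ℕ) (q : ℝ) :
    ∑ j ∈ Ico (l'+1) (l'+N+2), (((l'+N+1).choose j : ℕ) : ℝ) * q^j * (1-q)^(l'+N+1-j)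
      = (∑ j ∈ Ico (l'+1) (l'+N+1), (((l'+N).choose j : ℕ) : ℝ) * q^j * (1-q)^(l'+N-j))
        + (((l'+N).choose l' : ℕ) : ℝ) * q^(l'+1) * (1-q)^N := by
  set D : ℝ := ∑ i ∈ range N, (((l'+N).choose (l'+1+i) : ℕ) : ℝ) * q^(l'+1+i) * (1-q)^(N-1-i)
    with hD
  have hRHS : ∑ j ∈ Ico (l'+1) (l'+N+1), (((l'+N).choose j : ℕ) : ℝ) * q^j * (1-q)^(l'+N-j) = D := by
    rw [Finset.sum_Ico_eq_sum_range]
    have h1 : l'+N+1 - (l'+1) = N := by omega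
    rw [h1, hD]
    apply Finset.sum_congr rfl
    intro i hi
    have h2 : l' + 1 + i = l'+1+i := rfl
    have h3 : l'+N - (l'+1+i) = N-1-i := by omega
    rw [h3]
  rw [hRHS]
  rw [Finset.sum_Ico_eq_sum_range]
  have h1 : l'+N+2 - (l'+1) = N+1 := by omega
  rw [h1]
  have hsplit : ∀ i ∈ range (N+1),
      (((l'+N+1).choose (l'+1+i) : ℕ) : ℝ) * q^(l'+1+i) * (1-q)^(l'+N+1-(l'+1+i))
      = (((l'+N).choose (l'+i) : ℕ) : ℝ) * q^(l'+1+i) * (1-q)^(N-i)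
        + (((l'+N).choose (l'+1+i) : ℕ) : ℝ) * q^(l'+1+i) * (1-q)^(N-i) := by
    intro i hi
    have h2 : l'+N+1-(l'+1+i) = N-i := by omega
    have h3 : l'+N+1 = (l'+N)+1 := rfl
    have h4 : l'+1+i = (l'+i)+1 := by omega
    rw [h2, h3, h4, Nat.choose_succ_succ']
    push_cast
    rw [← h4]
    ring
  rw [Finset.sum_congr rfl hsplit, Finset.sum_add_distrib]
  have hA : ∑ i ∈ range (N+1), (((l'+N).choose (l'+i) : ℕ) : ℝ) * q^(l'+1+i) * (1-q)^(N-i)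
      = q * D + (((l'+N).choose l' : ℕ) : ℝ) * q^(l'+1) * (1-q)^N := by
    rw [Finset.sum_range_succ']
    have hg0 : (((l'+N).choose (l'+0) : ℕ) : ℝ) * q^(l'+1+0) * (1-q)^(N-0)
        = (((l'+N).choose l' : ℕ) : ℝ) * q^(l'+1) * (1-q)^N := by norm_num
    rw [hg0, hD, Finset.mul_sum]
    congr 1
    apply Finset.sum_congr rfl
    intro i hi
    have hiN : i < N := by simpa using hi
    have h5 : l' + (i+1) = l' + 1 + i := by omega
    have h6 : N - (i+1) = N-1-i := by omega
    have h7 : l' + 1 + (i+1) = (l'+1+i) + 1 := by omega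
    rw [h5, h6, h7, pow_succ]
    ring
  have hB : ∑ i ∈ range (N+1), (((l'+N).choose (l'+1+i) : ℕ) : ℝ) * q^(l'+1+i) * (1-q)^(N-i)
      = (1-q) * D := by
    rw [Finset.sum_range_succ]
    have htop : (l'+N).choose (l'+1+N) = 0 := Nat.choose_eq_zero_of_lt (by omega)
    rw [htop]
    simp only [Nat.cast_zero, zero_mul, add_zero]
    rw [hD, Finset.mul_sum]
    apply Finset.sum_congr rfl
    intro i hi
    have hiN : i < N := by simpa using hi
    have h6 : N - i = (N-1-i) + 1 := by omega
    rw [h6, pow_succ]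
    ring
  rw [hA, hB]
  ring

lemma majVote_odd (n : ℕ) (q : ℝ) :
    majVote (2*n+1) q = ∑ j ∈ Ico (n+1) (2*n+2), (((2*n+1).choose j : ℕ) : ℝ) * q^j * (1-q)^(2*n+1-j) := by
  unfold majVote
  have h : (2*n+1)/2 + 1 = n+1 := by omega
  rw [h]

lemma step (n : ℕ) (q : ℝ) :
    majVote (2*n+3) q = majVote (2*n+1) q
      + (((2*n+1).choose (n+1) : ℕ) : ℝ) * (2*q-1) * (q*(1-q))^(n+1) := by
  have hM3 : majVote (2*n+3) q
      = ∑ j ∈ Ico (n+2) (2*n+4), (((2*n+3).choose j : ℕ) : ℝ) * q^j * (1-q)^(2*n+3-j) := by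
    unfold majVote
    have h : (2*n+3)/2 + 1 = n+2 := by omega
    rw [h]
  have h1 := onestep (n+1) (n+1) q
  -- l' = n+1, N = n+1 : l'+N+1 = 2n+3, l'+N+2 = 2n+4, l'+N = 2n+2
  have e1 : n+1+(n+1)+2 = 2*n+4 := by omega
  have e2 : n+1+(n+1)+1 = 2*n+3 := by omega
  have e3 : n+1+(n+1) = 2*n+2 := by omega
  rw [e1, e2, e3] at h1
  have h2 := onestep (n+1) n q
  have f1 : n+1+n+2 = 2*n+3 := by omega
  have f2 : n+1+n+1 = 2*n+2 := by omega
  have f3 : n+1+n = 2*n+1 := by omega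
  rw [f1, f2, f3] at h2
  have h3 : ∑ j ∈ Ico (n+1) (2*n+2), (((2*n+1).choose j : ℕ) : ℝ) * q^j * (1-q)^(2*n+1-j)
      = (((2*n+1).choose (n+1) : ℕ) : ℝ) * q^(n+1) * (1-q)^(2*n+1-(n+1))
        + ∑ j ∈ Ico (n+2) (2*n+2), (((2*n+1).choose j : ℕ) : ℝ) * q^j * (1-q)^(2*n+1-j) := by
    exact Finset.sum_eq_sum_Ico_succ_bot (by omega) _
  have e4 : 2*n+1-(n+1) = n := by omega
  rw [e4] at h3
  have hdouble : ((2*n+2).choose (n+1) : ℕ) = 2 * ((2*n+1).choose (n+1) : ℕ) := by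
    have h5 : 2*n+2 = (2*n+1)+1 := by omega
    rw [h5, Nat.choose_succ_succ']
    have h6 : (2*n+1).choose n = (2*n+1).choose (n+1) := by
      have := Nat.choose_symm (show n+1 ≤ 2*n+1 from by omega)
      simpa [show 2*n+1-(n+1) = n from by omega] using this
    omega
  rw [hM3, h1, h2, majVote_odd, h3, hdouble, mul_pow]
  push_cast
  ring

lemma id1 (n : ℕ) (q : ℝ) :
    majVote (2*n+1) q = q + (2*q-1) * Sf n (q*(1-q)) := by
  induction n with
  | zero =>
    have : majVote 1 q = q := by
      unfold majVote
      norm_num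
    rw [this]
    simp [Sf]
  | succ n ih =>
    have h1 : 2*(n+1)+1 = 2*n+3 := by omega
    rw [h1, step, ih]
    have h2 : Sf (n+1) (q*(1-q)) = Sf n (q*(1-q)) + ((2*(n+1)-1).choose (n+1) : ℝ) * (q*(1-q))^(n+1) := by
      unfold Sf
      rw [← Finset.Ico_add_one_right_eq_Icc, Finset.sum_Ico_succ_top (by omega), Finset.Ico_add_one_right_eq_Icc]
    have h3 : 2*(n+1)-1 = 2*n+1 := by omega
    rw [h2, h3]
    ring

lemma sum_qq_eq (n : ℕ) (t : ℝ) :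
    ∑ k ∈ range (2*n+1), qq n k * t^k = 1 + t * Rf n t := by
  rw [Finset.sum_range_succ', qq_zero]
  simp only [pow_zero, mul_one]
  have h : ∑ k ∈ range (2*n), qq n (k+1) * t^(k+1) = t * Rf n t := by
    rw [Rf, Finset.mul_sum]
    exact Finset.sum_congr rfl fun k _ => by ring
  rw [h]
  ring

lemma key (n : ℕ) (q : ℝ) :
    majVote (2*n+1) q * (1 - majVote (2*n+1) q)
      = (q*(1-q)) * (4 - (1-4*(q*(1-q))) * Rf n (q*(1-q))) / 4 := by
  rw [id1]
  have hT : (1 + 2 * Sf n (q*(1-q)))^2 = 1 + (q*(1-q)) * Rf n (q*(1-q)) := by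
    rw [← Tf_eq, sq_Tf, sum_qq_eq]
  linear_combination (-(1 - 4*(q*(1-q)))/4) * hT

lemma Rf_repr (n : ℕ) (w : ℝ) :
    (1-4*w) * Rf n w = qq n 1 - ∑ k ∈ range (2*n), (4*qq n (k+1) - qq n (k+2)) * w^(k+1) := by
  have h1 : ∑ k ∈ range (2*n), qq n (k+1) * w^k
      = qq n 1 + ∑ k ∈ range (2*n), qq n (k+2) * w^(k+1) := by
    have h2 : ∑ k ∈ range (2*n+1), qq n (k+1) * w^k
        = (∑ k ∈ range (2*n), qq n (k+1) * w^k) + qq n (2*n+1) * w^(2*n) :=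
      Finset.sum_range_succ _ _
    have h3 : ∑ k ∈ range (2*n+1), qq n (k+1) * w^k
        = (∑ k ∈ range (2*n), qq n (k+1+1) * w^(k+1)) + qq n (0+1) * w^0 :=
      Finset.sum_range_succ' _ _
    rw [qq_top] at h2
    simp only [pow_zero, mul_one, zero_mul, add_zero] at h2 h3
    rw [← h2, h3]
    ring
  have hfin : ∑ k ∈ range (2*n), (4*qq n (k+1) - qq n (k+2)) * w^(k+1)
      = (∑ k ∈ range (2*n), 4*w*(qq n (k+1) * w^k)) - ∑ k ∈ range (2*n), qq n (k+2) * w^(k+1) := by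
    rw [← Finset.sum_sub_distrib]
    exact Finset.sum_congr rfl fun k _ => by ring
  rw [Rf, sub_mul, one_mul, Finset.mul_sum, h1, hfin]
  ring

lemma Rf_antitone (n : ℕ) {u v : ℝ} (hu : 0 ≤ u) (huv : u ≤ v) :
    (1-4*v) * Rf n v ≤ (1-4*u) * Rf n u := by
  rw [Rf_repr, Rf_repr]
  have hsum : ∑ k ∈ range (2*n), (4*qq n (k+1) - qq n (k+2)) * u^(k+1)
      ≤ ∑ k ∈ range (2*n), (4*qq n (k+1) - qq n (k+2)) * v^(k+1) := by
    apply Finset.sum_le_sum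
    intro k _
    apply mul_le_mul_of_nonneg_left (pow_le_pow_left₀ hu huv _)
    linarith [qq_succ_le n (k+1)]
  linarith

end Stmt13

/-- For every odd `m ≥ 3`, the map `x ↦ M_m(x)(1 - M_m(x)) / (x(1-x))` is
monotonically nonincreasing on `(1/2, 1)`; equivalently, for all
`1/2 < x ≤ y < 1`, `M_m(y)(1-M_m(y)) x(1-x) ≤ M_m(x)(1-M_m(x)) y(1-y)`. -/
theorem stmt_13 (m : ℕ) (hm : Odd m) (hm3 : 3 ≤ m) :
    AntitoneOn (fun x : ℝ => majVote m x * (1 - majVote m x) / (x * (1 - x)))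
      (Set.Ioo (1 / 2 : ℝ) 1) ∧
    ∀ x y : ℝ, 1 / 2 < x → x ≤ y → y < 1 →
      majVote m y * (1 - majVote m y) * (x * (1 - x)) ≤
        majVote m x * (1 - majVote m x) * (y * (1 - y)) := by
  obtain ⟨n, rfl⟩ : ∃ n, m = 2*n+1 := by
    obtain ⟨k, hk⟩ := hm
    exact ⟨k, by omega⟩
  have main : ∀ x y : ℝ, 1/2 < x → x ≤ y → y < 1 →
      majVote (2*n+1) y * (1 - majVote (2*n+1) y) * (x*(1-x)) ≤
      majVote (2*n+1) x * (1 - majVote (2*n+1) x) * (y*(1-y)) := by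
    intro x y hx hxy hy
    have hx1 : x < 1 := lt_of_le_of_lt hxy hy
    have hy2 : (1:ℝ)/2 < y := lt_of_lt_of_le hx hxy
    have htx : 0 < x*(1-x) := by nlinarith
    have hty : 0 < y*(1-y) := by nlinarith
    have hle : y*(1-y) ≤ x*(1-x) := by nlinarith
    have hG := Stmt13.Rf_antitone n (le_of_lt hty) hle
    rw [Stmt13.key n x, Stmt13.key n y]
    have hp : 0 < (x*(1-x)) * (y*(1-y)) := mul_pos htx hty
    nlinarith [mul_le_mul_of_nonneg_left hG (le_of_lt hp)]
  refine ⟨?_, main⟩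
  intro x hx y hy hxy
  simp only
  have htx : 0 < x*(1-x) := by
    obtain ⟨h1, h2⟩ := hx
    nlinarith
  have hty : 0 < y*(1-y) := by
    obtain ⟨h1, h2⟩ := hy
    nlinarith
  rw [div_le_div_iff₀ hty htx]
  exact main x y hx.1 hxy hy.2
end

section
/- For every odd integer $m \ge 3$ and all reals $q, q_b$ with $1/2 < q \le q_b \le 1$: $q\, q_b + (1-q)(1-q_b) \le M_m(q)\, M_m(q_b) + \big(1 - M_m(q)\big)\big(1 - M_m(q_b)\big)$. -/
/-- Binomial upper tail: `∑_{j=a}^{m} C(m,j) q^j (1-q)^(m-j)`. -/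
noncomputable def tailT (m a : ℕ) (q : ℝ) : ℝ :=
  ∑ j ∈ Finset.Ico a (m + 1), (m.choose j : ℝ) * q ^ j * (1 - q) ^ (m - j)

lemma tailT_rec (m a : ℕ) (ha : a ≤ m) (q : ℝ) :
    tailT (m + 1) (a + 1) q = q * tailT m a q + (1 - q) * tailT m (a + 1) q := by
  unfold tailT
  have h1 : Finset.Ico (a + 1) (m + 1 + 1)
      = Finset.map (addRightEmbedding 1) (Finset.Ico a (m + 1)) := by
    rw [Finset.map_add_right_Ico]
  rw [h1, Finset.sum_map]
  have hterm : ∀ j ∈ Finset.Ico a (m + 1),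
      ((m + 1).choose (addRightEmbedding 1 j) : ℝ) * q ^ (addRightEmbedding 1 j)
        * (1 - q) ^ (m + 1 - addRightEmbedding 1 j)
      = q * ((m.choose j : ℝ) * q ^ j * (1 - q) ^ (m - j))
        + (1 - q) * ((m.choose (j + 1) : ℝ) * q ^ (j + 1) * (1 - q) ^ (m - (j + 1))) := by
    intro j hj
    simp only [Finset.mem_Ico] at hj
    have hjm : j ≤ m := by omega
    simp only [addRightEmbedding_apply]
    rw [Nat.choose_succ_succ, Nat.succ_sub_succ]
    rcases eq_or_lt_of_le hjm with hje | hjl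
    · subst hje
      simp [Nat.choose_succ_self]
      ring
    · have : m - j = (m - (j+1)) + 1 := by omega
      rw [this]
      push_cast
      ring
  rw [Finset.sum_congr rfl hterm, Finset.sum_add_distrib, ← Finset.mul_sum]
  congr 1
  rw [← Finset.mul_sum]
  congr 1
  have h3 : ∑ j ∈ Finset.Ico (a+1) (m+1+1), (m.choose j : ℝ) * q ^ j * (1 - q) ^ (m - j)
      = ∑ j ∈ Finset.Ico (a+1) (m+1), (m.choose j : ℝ) * q ^ j * (1 - q) ^ (m - j) := by
    rw [Finset.sum_Ico_succ_top (show a+1 ≤ m+1 by omega)]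
    simp [Nat.choose_succ_self]
  rw [← h3, h1, Finset.sum_map]
  apply Finset.sum_congr rfl
  intro i hi
  simp [addRightEmbedding_apply]

lemma tailT_bot (m a : ℕ) (ha : a ≤ m) (q : ℝ) :
    tailT m a q = (m.choose a : ℝ) * q ^ a * (1 - q) ^ (m - a) + tailT m (a + 1) q := by
  unfold tailT
  exact Finset.sum_eq_sum_Ico_succ_bot (by omega) _

lemma tailT_step (t : ℕ) (q : ℝ) :
    tailT (2 * t + 1 + 2) (t + 2) q =
      tailT (2 * t + 1) (t + 1) q
        + ((2 * t + 1).choose (t + 1) : ℝ) * (q * (1 - q)) ^ (t + 1) * (2 * q - 1) := by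
  have r1 : tailT (2*t+1+2) (t+2) q
      = q * tailT (2*t+2) (t+1) q + (1 - q) * tailT (2*t+2) (t+2) q := by
    rw [show 2*t+1+2 = 2*t+2+1 by omega, show t+2 = t+1+1 by omega]
    exact tailT_rec _ _ (by omega) q
  have r2 : tailT (2*t+2) (t+1) q
      = q * tailT (2*t+1) t q + (1 - q) * tailT (2*t+1) (t+1) q := by
    rw [show 2*t+2 = 2*t+1+1 by omega]
    exact tailT_rec _ _ (by omega) q
  have r3 : tailT (2*t+2) (t+2) q
      = q * tailT (2*t+1) (t+1) q + (1 - q) * tailT (2*t+1) (t+2) q := by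
    rw [show 2*t+2 = 2*t+1+1 by omega, show t+2 = t+1+1 by omega]
    exact tailT_rec _ _ (by omega) q
  have b1 : tailT (2*t+1) t q
      = ((2*t+1).choose t : ℝ) * q ^ t * (1 - q) ^ (t+1) + tailT (2*t+1) (t+1) q := by
    have := tailT_bot (2*t+1) t (by omega) q
    rwa [show 2*t+1-t = t+1 by omega] at this
  have b2 : tailT (2*t+1) (t+1) q
      = ((2*t+1).choose (t+1) : ℝ) * q ^ (t+1) * (1 - q) ^ t + tailT (2*t+1) (t+2) q := by
    have := tailT_bot (2*t+1) (t+1) (by omega) q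
    rwa [show 2*t+1-(t+1) = t by omega, show t+1+1 = t+2 by omega] at this
  have hsymm : ((2 * t + 1).choose t : ℝ) = ((2 * t + 1).choose (t + 1) : ℝ) := by
    norm_cast
    rw [← Nat.choose_symm (by omega : t ≤ 2 * t + 1)]
    congr 1
    omega
  rw [r1, r2, r3, b1, b2, hsymm, mul_pow]
  ring

lemma tailT_key (t : ℕ) (q : ℝ) (hq : 1 / 2 ≤ q) (hq1 : q ≤ 1) :
    q ≤ tailT (2 * t + 1) (t + 1) q := by
  induction t with
  | zero =>
    unfold tailT
    norm_num
  | succ t ih =>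
    have e : 2 * (t + 1) + 1 = 2 * t + 1 + 2 := by ring
    rw [e, show t+1+1 = t+2 from rfl, tailT_step]
    have hnn : 0 ≤ ((2 * t + 1).choose (t + 1) : ℝ) * (q * (1 - q)) ^ (t + 1) * (2 * q - 1) := by
      apply mul_nonneg
      · apply mul_nonneg (by positivity)
        apply pow_nonneg
        nlinarith
      · nlinarith
    linarith

lemma majVote_ge (m : ℕ) (hm : Odd m) (q : ℝ) (hq : 1 / 2 ≤ q) (hq1 : q ≤ 1) :
    q ≤ majVote m q := by
  obtain ⟨t, ht⟩ := hm
  have hdef : majVote m q = tailT (2 * t + 1) (t + 1) q := by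
    unfold majVote tailT
    subst ht
    congr 2
    omega
  rw [hdef]
  exact tailT_key t q hq hq1

/-- For every odd `m ≥ 3` and reals `1/2 < q ≤ q_b ≤ 1`:
`q q_b + (1-q)(1-q_b) ≤ M_m(q) M_m(q_b) + (1 - M_m(q))(1 - M_m(q_b))`. -/
theorem stmt_16 (m : ℕ) (hm : Odd m) (hm3 : 3 ≤ m) (q qb : ℝ)
    (hq : 1 / 2 < q) (hqqb : q ≤ qb) (hqb : qb ≤ 1) :
    q * qb + (1 - q) * (1 - qb) ≤
      majVote m q * majVote m qb + (1 - majVote m q) * (1 - majVote m qb) := by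
  have hA := majVote_ge m hm q hq.le (le_trans hqqb hqb)
  have hB := majVote_ge m hm qb (le_trans hq.le hqqb) hqb
  nlinarith [mul_nonneg (sub_nonneg.2 hA) (sub_nonneg.2 hB),
    mul_nonneg (sub_nonneg.2 hA) (by linarith : (0:ℝ) ≤ 2 * qb - 1),
    mul_nonneg (sub_nonneg.2 hB) (by linarith : (0:ℝ) ≤ 2 * q - 1)]
end

section
/- Let $L$, $B$, $W$ be mutually independent events on a probability space with $\Pr(L) = q$, $\Pr(B) = p + \epsilon$, and $\Pr(W) = p$, where $p \in [1/2, 1]$, $\epsilon \in (0, 1-p]$, and $q \in (1/2, 1]$. Define the random variable $G$ by: $G = 1$ on $(B \cap W^c \cap L) \cup (B^c \cap W \cap L^c)$, $G = -1$ on $(B^c \cap W \cap L) \cup (B \cap W^c \cap L^c)$, and $G = 0$ otherwise. Then $\Pr(G = 1) = q\epsilon + (1-p-\epsilon)p$, $\Pr(G = -1) = (1-q)\epsilon + (1-p-\epsilon)p$, $\Pr(G = 0) = p(p+\epsilon) + (1-p-\epsilon)(1-p)$, and $\mathbb{E}[G] = (2q-1)\epsilon > 0$. -/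
open MeasureTheory ProbabilityTheory

/-- Parameterization of the gap indicator with independent classifier and label
errors. Let `L` (label correct), `B` (better classifier correct) and `W` (worse
classifier correct) be mutually independent events with `P(L) = q`,
`P(B) = p + ε`, `P(W) = p`. Define `G = 1` on `(B ∩ Wᶜ ∩ L) ∪ (Bᶜ ∩ W ∩ Lᶜ)`,
`G = -1` on `(Bᶜ ∩ W ∩ L) ∪ (B ∩ Wᶜ ∩ Lᶜ)` and `G = 0` otherwise. Then
`P(G=1) = qε + (1-p-ε)p`, `P(G=-1) = (1-q)ε + (1-p-ε)p`,
`P(G=0) = p(p+ε) + (1-p-ε)(1-p)` and `E[G] = (2q-1)ε > 0`. -/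
theorem stmt_18 {Ω : Type*} [MeasurableSpace Ω] (μ : Measure Ω)
    [IsProbabilityMeasure μ] (L B W : Set Ω)
    (hLm : MeasurableSet L) (hBm : MeasurableSet B) (hWm : MeasurableSet W)
    (hindep : iIndepSet (fun i : Fin 3 => ![L, B, W] i) μ)
    (p ε q : ℝ) (hp : p ∈ Set.Icc (1 / 2 : ℝ) 1) (hε : ε ∈ Set.Ioc (0 : ℝ) (1 - p))
    (hq : q ∈ Set.Ioc (1 / 2 : ℝ) 1)
    (hPL : μ L = ENNReal.ofReal q) (hPB : μ B = ENNReal.ofReal (p + ε))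
    (hPW : μ W = ENNReal.ofReal p)
    (G : Ω → ℝ)
    (hG1 : ∀ ω ∈ (B ∩ Wᶜ ∩ L) ∪ (Bᶜ ∩ W ∩ Lᶜ), G ω = 1)
    (hGm1 : ∀ ω ∈ (Bᶜ ∩ W ∩ L) ∪ (B ∩ Wᶜ ∩ Lᶜ), G ω = -1)
    (hG0 : ∀ ω ∉ ((B ∩ Wᶜ ∩ L) ∪ (Bᶜ ∩ W ∩ Lᶜ)) ∪ ((Bᶜ ∩ W ∩ L) ∪ (B ∩ Wᶜ ∩ Lᶜ)),
      G ω = 0) :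
    μ {ω | G ω = 1} = ENNReal.ofReal (q * ε + (1 - p - ε) * p) ∧
    μ {ω | G ω = -1} = ENNReal.ofReal ((1 - q) * ε + (1 - p - ε) * p) ∧
    μ {ω | G ω = 0} = ENNReal.ofReal (p * (p + ε) + (1 - p - ε) * (1 - p)) ∧
    ∫ ω, G ω ∂μ = (2 * q - 1) * ε ∧ 0 < (2 * q - 1) * ε := by
  obtain ⟨hp1, hp2⟩ := hp
  obtain ⟨hε1, hε2⟩ := hε
  obtain ⟨hq1, hq2⟩ := hq
  have hq0 : (0:ℝ) ≤ q := by linarith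
  have hp0 : (0:ℝ) ≤ p := by linarith
  have hpe0 : (0:ℝ) ≤ p + ε := by linarith
  have h1q : (0:ℝ) ≤ 1 - q := by linarith
  have h1p : (0:ℝ) ≤ 1 - p := by linarith
  have h1pe : (0:ℝ) ≤ 1 - p - ε := by linarith
  -- complement measures
  have hPLc : μ Lᶜ = ENNReal.ofReal (1 - q) := by
    rw [prob_compl_eq_one_sub hLm, hPL, ← ENNReal.ofReal_one,
      ← ENNReal.ofReal_sub _ hq0]
  have hPBc : μ Bᶜ = ENNReal.ofReal (1 - p - ε) := by
    rw [prob_compl_eq_one_sub hBm, hPB, ← ENNReal.ofReal_one,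
      ← ENNReal.ofReal_sub _ hpe0]
    ring_nf
  have hPWc : μ Wᶜ = ENNReal.ofReal (1 - p) := by
    rw [prob_compl_eq_one_sub hWm, hPW, ← ENNReal.ofReal_one,
      ← ENNReal.ofReal_sub _ hp0]
  -- key independence computation
  have hi : iIndep (fun i : Fin 3 => MeasurableSpace.generateFrom {![L, B, W] i}) μ := hindep
  have key : ∀ tB tW tL : Set Ω,
      MeasurableSet[MeasurableSpace.generateFrom {B}] tB →
      MeasurableSet[MeasurableSpace.generateFrom {W}] tW →
      MeasurableSet[MeasurableSpace.generateFrom {L}] tL →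
      μ (tB ∩ tW ∩ tL) = μ tB * μ tW * μ tL := by
    intro tB tW tL h1 h2 h0
    have hk := hi.meas_iInter (s := ![tL, tB, tW]) (fun i => by
      fin_cases i
      · exact h0
      · exact h1
      · exact h2)
    have hset : (⋂ i, ![tL, tB, tW] i) = tB ∩ tW ∩ tL := by
      ext ω; simp [Fin.forall_fin_succ]; tauto
    rw [hset, Fin.prod_univ_three] at hk
    rw [hk]; simp [Matrix.cons_val_one]; ring
  have mB : MeasurableSet[MeasurableSpace.generateFrom {B}] B :=
    MeasurableSpace.measurableSet_generateFrom rfl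
  have mW : MeasurableSet[MeasurableSpace.generateFrom {W}] W :=
    MeasurableSpace.measurableSet_generateFrom rfl
  have mL : MeasurableSet[MeasurableSpace.generateFrom {L}] L :=
    MeasurableSpace.measurableSet_generateFrom rfl
  -- four atoms
  have hA1 : μ (B ∩ Wᶜ ∩ L) = ENNReal.ofReal ((p + ε) * (1 - p) * q) := by
    rw [key B Wᶜ L mB mW.compl mL, hPB, hPWc, hPL,
      ← ENNReal.ofReal_mul hpe0, ← ENNReal.ofReal_mul (by positivity)]
  have hA2 : μ (Bᶜ ∩ W ∩ Lᶜ) = ENNReal.ofReal ((1 - p - ε) * p * (1 - q)) := by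
    rw [key Bᶜ W Lᶜ mB.compl mW mL.compl, hPBc, hPW, hPLc,
      ← ENNReal.ofReal_mul h1pe, ← ENNReal.ofReal_mul (by positivity)]
  have hA3 : μ (Bᶜ ∩ W ∩ L) = ENNReal.ofReal ((1 - p - ε) * p * q) := by
    rw [key Bᶜ W L mB.compl mW mL, hPBc, hPW, hPL,
      ← ENNReal.ofReal_mul h1pe, ← ENNReal.ofReal_mul (by positivity)]
  have hA4 : μ (B ∩ Wᶜ ∩ Lᶜ) = ENNReal.ofReal ((p + ε) * (1 - p) * (1 - q)) := by
    rw [key B Wᶜ Lᶜ mB mW.compl mL.compl, hPB, hPWc, hPLc,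
      ← ENNReal.ofReal_mul hpe0, ← ENNReal.ofReal_mul (by positivity)]
  set S1 := (B ∩ Wᶜ ∩ L) ∪ (Bᶜ ∩ W ∩ Lᶜ) with hS1def
  set S2 := (Bᶜ ∩ W ∩ L) ∪ (B ∩ Wᶜ ∩ Lᶜ) with hS2def
  have hS1m : MeasurableSet S1 :=
    ((hBm.inter hWm.compl).inter hLm).union ((hBm.compl.inter hWm).inter hLm.compl)
  have hS2m : MeasurableSet S2 :=
    ((hBm.compl.inter hWm).inter hLm).union ((hBm.inter hWm.compl).inter hLm.compl)
  have hd1 : Disjoint (B ∩ Wᶜ ∩ L) (Bᶜ ∩ W ∩ Lᶜ) := by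
    rw [Set.disjoint_left]; rintro ω ⟨⟨hB, -⟩, -⟩ ⟨⟨hBc, -⟩, -⟩; exact hBc hB
  have hd2 : Disjoint (Bᶜ ∩ W ∩ L) (B ∩ Wᶜ ∩ Lᶜ) := by
    rw [Set.disjoint_left]; rintro ω ⟨⟨hBc, -⟩, -⟩ ⟨⟨hB, -⟩, -⟩; exact hBc hB
  have hd12 : Disjoint S1 S2 := by
    rw [Set.disjoint_left]
    rintro ω (⟨⟨hB, hWc⟩, hL⟩ | ⟨⟨hBc, hW⟩, hLc⟩) (⟨⟨hBc', hW'⟩, hL'⟩ | ⟨⟨hB', hWc'⟩, hLc'⟩)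
    · exact hBc' hB
    · exact hLc' hL
    · exact hLc hL'
    · exact hBc hB'
  have hμS1 : μ S1 = ENNReal.ofReal (q * ε + (1 - p - ε) * p) := by
    rw [hS1def, measure_union hd1 ((hBm.compl.inter hWm).inter hLm.compl), hA1, hA2,
      ← ENNReal.ofReal_add (by positivity) (by positivity)]
    congr 1; ring
  have hμS2 : μ S2 = ENNReal.ofReal ((1 - q) * ε + (1 - p - ε) * p) := by
    rw [hS2def, measure_union hd2 ((hBm.inter hWm.compl).inter hLm.compl), hA3, hA4,
      ← ENNReal.ofReal_add (by positivity) (by positivity)]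
    congr 1; ring
  -- level sets
  have hset1 : {ω | G ω = 1} = S1 := by
    ext ω
    simp only [Set.mem_setOf_eq]
    constructor
    · intro h
      by_cases h1 : ω ∈ S1
      · exact h1
      by_cases h2 : ω ∈ S2
      · exact absurd (hGm1 ω h2 ▸ h) (by norm_num)
      · exact absurd (hG0 ω (by simp [Set.mem_union, h1, h2]) ▸ h) (by norm_num)
    · exact hG1 ω
  have hset2 : {ω | G ω = -1} = S2 := by
    ext ω
    simp only [Set.mem_setOf_eq]
    constructor
    · intro h
      by_cases h2 : ω ∈ S2
      · exact h2
      by_cases h1 : ω ∈ S1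
      · exact absurd (hG1 ω h1 ▸ h) (by norm_num)
      · exact absurd (hG0 ω (by simp [Set.mem_union, h1, h2]) ▸ h) (by norm_num)
    · exact hGm1 ω
  have hset0 : {ω | G ω = 0} = (S1 ∪ S2)ᶜ := by
    ext ω
    simp only [Set.mem_setOf_eq, Set.mem_compl_iff, Set.mem_union]
    constructor
    · intro h hmem
      rcases hmem with h1 | h2
      · exact absurd (hG1 ω h1 ▸ h) (by norm_num)
      · exact absurd (hGm1 ω h2 ▸ h) (by norm_num)
    · intro h; exact hG0 ω h
  have hμ12 : μ (S1 ∪ S2) =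
      ENNReal.ofReal ((q * ε + (1 - p - ε) * p) + ((1 - q) * ε + (1 - p - ε) * p)) := by
    rw [measure_union hd12 hS2m, hμS1, hμS2,
      ← ENNReal.ofReal_add (by positivity) (by positivity)]
  have hμ0 : μ {ω | G ω = 0} =
      ENNReal.ofReal (p * (p + ε) + (1 - p - ε) * (1 - p)) := by
    rw [hset0, prob_compl_eq_one_sub (hS1m.union hS2m), hμ12, ← ENNReal.ofReal_one,
      ← ENNReal.ofReal_sub _ (by positivity)]
    congr 1; ring
  -- integral
  have hGeq : G = fun ω => S1.indicator (fun _ => (1:ℝ)) ω +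
      S2.indicator (fun _ => (-1:ℝ)) ω := by
    funext ω
    by_cases h1 : ω ∈ S1
    · have h2 : ω ∉ S2 := fun h2 => Set.disjoint_left.1 hd12 h1 h2
      simp [Set.indicator_of_mem h1, Set.indicator_of_notMem h2, hG1 ω h1]
    · by_cases h2 : ω ∈ S2
      · simp [Set.indicator_of_notMem h1, Set.indicator_of_mem h2, hGm1 ω h2]
      · simp [Set.indicator_of_notMem h1, Set.indicator_of_notMem h2,
          hG0 ω (by simp [Set.mem_union, h1, h2])]
  have hint1 : Integrable (S1.indicator (fun _ => (1:ℝ))) μ :=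
    (integrable_const (1:ℝ)).indicator hS1m
  have hint2 : Integrable (S2.indicator (fun _ => (-1:ℝ))) μ :=
    (integrable_const (-1:ℝ)).indicator hS2m
  have hEG : ∫ ω, G ω ∂μ = (2 * q - 1) * ε := by
    rw [hGeq, integral_add hint1 hint2, integral_indicator_const _ hS1m,
      integral_indicator_const _ hS2m, measureReal_def, measureReal_def, hμS1, hμS2,
      ENNReal.toReal_ofReal (by positivity), ENNReal.toReal_ofReal (by positivity)]
    simp only [smul_eq_mul]
    ring
  refine ⟨by rw [hset1, hμS1], by rw [hset2, hμS2], hμ0, hEG, ?_⟩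
  have : 0 < 2 * q - 1 := by linarith
  exact mul_pos this hε1
end

section
/- For every odd integer $m \ge 3$ and every $q \in (1/2, 1)$: $\dfrac{m-1}{2} \ge \dfrac{2}{1 + 2\sigma(m,q)} \sum_{k \text{ odd},\, 1 \le k \le m-2} \dfrac{k+1}{2} \binom{k}{(k+1)/2} q^{(k+1)/2} (1-q)^{(k+1)/2}$, where $\sigma(m,q) := \sum_{k \text{ odd},\, 1 \le k \le m-2} \binom{k}{(k+1)/2} q^{(k+1)/2} (1-q)^{(k+1)/2}$. -/
/-- For every odd `m ≥ 3` and `q ∈ (1/2, 1)`: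
`(m-1)/2 ≥ (2/(1 + 2σ(m,q))) ∑_{k odd, 1 ≤ k ≤ m-2} ((k+1)/2) C(k,(k+1)/2) (q(1-q))^((k+1)/2)`. -/
theorem stmt_19 (m : ℕ) (hm : Odd m) (hm3 : 3 ≤ m) (q : ℝ)
    (hq : q ∈ Set.Ioo (1 / 2 : ℝ) 1) :
    ((m : ℝ) - 1) / 2 ≥ 2 / (1 + 2 * sigmaFun m q) *
      ∑ k ∈ (Finset.Icc 1 (m - 2)).filter (fun k => k % 2 = 1),
        (((k : ℝ) + 1) / 2) * (k.choose ((k + 1) / 2) : ℝ) *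
          q ^ ((k + 1) / 2) * (1 - q) ^ ((k + 1) / 2) := by
  obtain ⟨hq1, hq2⟩ := hq
  have hq0 : (0:ℝ) < q := by linarith
  have hq3 : (0:ℝ) < 1 - q := by linarith
  have hterm : ∀ k ∈ (Finset.Icc 1 (m - 2)).filter (fun k => k % 2 = 1),
      (0:ℝ) ≤ (k.choose ((k + 1) / 2) : ℝ) * q ^ ((k + 1) / 2) * (1 - q) ^ ((k + 1) / 2) := by
    intro k _
    positivity
  have hσ : 0 ≤ sigmaFun m q := Finset.sum_nonneg hterm
  have hden : (0:ℝ) < 1 + 2 * sigmaFun m q := by linarith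
  have hm3' : (3:ℝ) ≤ (m:ℝ) := by exact_mod_cast hm3
  have hS : ∑ k ∈ (Finset.Icc 1 (m - 2)).filter (fun k => k % 2 = 1),
        (((k : ℝ) + 1) / 2) * (k.choose ((k + 1) / 2) : ℝ) *
          q ^ ((k + 1) / 2) * (1 - q) ^ ((k + 1) / 2)
      ≤ ((m:ℝ) - 1) / 2 * sigmaFun m q := by
    rw [sigmaFun, Finset.mul_sum]
    apply Finset.sum_le_sum
    intro k hk
    have hk2 : k ≤ m - 2 := (Finset.mem_Icc.mp (Finset.mem_filter.mp hk).1).2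
    have hkm : (k:ℝ) ≤ (m:ℝ) - 2 := by
      have : (k:ℝ) ≤ ((m - 2 : ℕ) : ℝ) := by exact_mod_cast hk2
      have h2 : ((m - 2 : ℕ) : ℝ) = (m:ℝ) - 2 := by
        have : 2 ≤ m := by omega
        push_cast [this]; ring
      linarith [h2 ▸ this]
    have hcoef : (((k : ℝ) + 1) / 2) ≤ ((m:ℝ) - 1) / 2 := by linarith
    have hpos : (0:ℝ) ≤ (k.choose ((k + 1) / 2) : ℝ) * q ^ ((k + 1) / 2) * (1 - q) ^ ((k + 1) / 2) := by
      positivity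
    calc (((k : ℝ) + 1) / 2) * (k.choose ((k + 1) / 2) : ℝ) *
          q ^ ((k + 1) / 2) * (1 - q) ^ ((k + 1) / 2)
        = (((k : ℝ) + 1) / 2) * ((k.choose ((k + 1) / 2) : ℝ) *
          q ^ ((k + 1) / 2) * (1 - q) ^ ((k + 1) / 2)) := by ring
      _ ≤ ((m:ℝ) - 1) / 2 * ((k.choose ((k + 1) / 2) : ℝ) *
          q ^ ((k + 1) / 2) * (1 - q) ^ ((k + 1) / 2)) := by
          exact mul_le_mul_of_nonneg_right hcoef hpos
  have h2 : 2 / (1 + 2 * sigmaFun m q) *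
      ∑ k ∈ (Finset.Icc 1 (m - 2)).filter (fun k => k % 2 = 1),
        (((k : ℝ) + 1) / 2) * (k.choose ((k + 1) / 2) : ℝ) *
          q ^ ((k + 1) / 2) * (1 - q) ^ ((k + 1) / 2)
      ≤ 2 / (1 + 2 * sigmaFun m q) * (((m:ℝ) - 1) / 2 * sigmaFun m q) := by
    apply mul_le_mul_of_nonneg_left hS
    positivity
  have h3 : 2 / (1 + 2 * sigmaFun m q) * (((m:ℝ) - 1) / 2 * sigmaFun m q)
      ≤ ((m:ℝ) - 1) / 2 := by
    rw [div_mul_eq_mul_div, div_le_iff₀ hden]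
    nlinarith [hσ, hm3']
  linarith
end
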